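/- arXiv:2407.15769 — 14 statements merged into one kernel-verified Lean document; each statement's English description precedes it below -/
import Mathlib

section
/- Let K be a field, let a,b,c,d ∈ K, and let I be the ideal of the polynomial ring K[u,v] generated by uv, u² − au − bv and v² − cu − dv. Then the images ū and v̄ of u and v in the quotient algebra K[u,v]/I are K-linearly independent if and only if one of the following holds: (i) b ≠ 0 and c = d = 0; (ii) b = 0 and a = 0; (iii) b = 0, a ≠ 0 and c = 0. In all other cases ū and v̄ are K-linearly dependent. -/
open MvPolynomial

set_option maxHeartbeats 1000000 in
set_option synthInstance.maxHeartbeats 400000 in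
/-- Let `K` be a field, `a b c d ∈ K`, and `I` the ideal of `K[u,v]`
generated by `uv`, `u² − au − bv` and `v² − cu − dv`.  The residue classes of `u` and `v`
in `K[u,v]/I` are `K`-linearly independent if and only if
(i) `b ≠ 0, c = d = 0`, or (ii) `b = 0, a = 0`, or (iii) `b = 0, a ≠ 0, c = 0`. -/
theorem stmt0 (K : Type*) [Field K] (a b c d : K)
    (I : Ideal (MvPolynomial (Fin 2) K))
    (hI : I = Ideal.span {X 0 * X 1, X 0 ^ 2 - C a * X 0 - C b * X 1,
      X 1 ^ 2 - C c * X 0 - C d * X 1}) :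
    LinearIndependent K
      ![Ideal.Quotient.mk I (X 0), Ideal.Quotient.mk I (X 1)] ↔
      ((b ≠ 0 ∧ c = 0 ∧ d = 0) ∨ (b = 0 ∧ a = 0) ∨ (b = 0 ∧ a ≠ 0 ∧ c = 0)) := by
  have hsm : ∀ (p : K) (r : MvPolynomial (Fin 2) K),
      (Ideal.Quotient.mk I) (C p * r) = p • (Ideal.Quotient.mk I) r := by
    intro p r
    rw [map_mul, ← MvPolynomial.algebraMap_eq, Ideal.Quotient.mk_algebraMap,
      ← Algebra.smul_def]
  rw [Fintype.linearIndependent_iff]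
  constructor
  · intro hLI
    set g1 : MvPolynomial (Fin 2) K := X 0 * X 1 with hg1
    set g2 : MvPolynomial (Fin 2) K := X 0 ^ 2 - C a * X 0 - C b * X 1 with hg2
    set g3 : MvPolynomial (Fin 2) K := X 1 ^ 2 - C c * X 0 - C d * X 1 with hg3
    have hg1I : g1 ∈ I := by rw [hI]; exact Ideal.subset_span (by simp)
    have hg2I : g2 ∈ I := by rw [hI]; exact Ideal.subset_span (by simp)
    have hg3I : g3 ∈ I := by rw [hI]; exact Ideal.subset_span (by simp)
    have mem1 : C (b*c) * X 0 + C (b*d) * X 1 ∈ I := by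
      have he : C (b*c) * X 0 + C (b*d) * X 1
          = X 0 * g1 - C a * g1 - X 1 * g2 - C b * g3 := by
        rw [hg1, hg2, hg3]; push_cast [map_mul]; ring
      rw [he]
      exact Ideal.sub_mem _ (Ideal.sub_mem _ (Ideal.sub_mem _
        (Ideal.mul_mem_left _ _ hg1I) (Ideal.mul_mem_left _ _ hg1I))
        (Ideal.mul_mem_left _ _ hg2I)) (Ideal.mul_mem_left _ _ hg3I)
    have mem2 : C (a*c) * X 0 + C (b*c) * X 1 ∈ I := by
      have he : C (a*c) * X 0 + C (b*c) * X 1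
          = X 1 * g1 - C d * g1 - X 0 * g3 - C c * g2 := by
        rw [hg1, hg2, hg3]; push_cast [map_mul]; ring
      rw [he]
      exact Ideal.sub_mem _ (Ideal.sub_mem _ (Ideal.sub_mem _
        (Ideal.mul_mem_left _ _ hg1I) (Ideal.mul_mem_left _ _ hg1I))
        (Ideal.mul_mem_left _ _ hg3I)) (Ideal.mul_mem_left _ _ hg2I)
    have key : ∀ p q : K, C p * X 0 + C q * X 1 ∈ I → p = 0 ∧ q = 0 := by
      intro p q hpq
      have h0 := hLI ![p, q] ?_
      · exact ⟨h0 0, h0 1⟩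
      · rw [Fin.sum_univ_two]
        simp only [Matrix.cons_val_zero, Matrix.cons_val_one, Matrix.head_cons]
        rw [← hsm, ← hsm, ← map_add]
        exact Ideal.Quotient.eq_zero_iff_mem.mpr hpq
    obtain ⟨hbc, hbd⟩ := key _ _ mem1
    obtain ⟨hac, _⟩ := key _ _ mem2
    by_cases hb : b = 0
    · by_cases ha : a = 0
      · exact Or.inr (Or.inl ⟨hb, ha⟩)
      · refine Or.inr (Or.inr ⟨hb, ha, ?_⟩)
        rcases mul_eq_zero.mp hac with h | h
        · exact absurd h ha
        · exact h
    · refine Or.inl ⟨hb, ?_, ?_⟩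
      · rcases mul_eq_zero.mp hbc with h | h
        · exact absurd h hb
        · exact h
      · rcases mul_eq_zero.mp hbd with h | h
        · exact absurd h hb
        · exact h
  · rintro h
    have hbc : b * c = 0 := by
      rcases h with ⟨_, hc, _⟩ | ⟨hb, _⟩ | ⟨hb, _, hc⟩ <;> simp [*]
    have hbd : b * d = 0 := by
      rcases h with ⟨_, _, hd⟩ | ⟨hb, _⟩ | ⟨hb, _, _⟩ <;> simp [*]
    have hac : a * c = 0 := by
      rcases h with ⟨_, hc, _⟩ | ⟨_, ha⟩ | ⟨_, _, hc⟩ <;> simp [*]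
    -- a 3-dimensional representation by commuting matrices
    set MU : Matrix (Fin 3) (Fin 3) K := !![0,0,0; 1,a,0; 0,b,0] with hMU
    set MV : Matrix (Fin 3) (Fin 3) K := !![0,0,0; 0,0,c; 1,0,d] with hMV
    have hUV : MU * MV = 0 := by
      rw [hMU, hMV]; ext i j
      fin_cases i <;> fin_cases j <;>
        simp [Matrix.mul_apply, Fin.sum_univ_succ, -mul_eq_zero, -zero_eq_mul,
          -smul_eq_zero, smul_eq_mul, Matrix.vecHead, Matrix.vecTail, Function.comp] <;>
        (first
          | assumption
          | ring1
          | linear_combination hbc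
          | linear_combination hbd
          | linear_combination hac
          | linear_combination -hbc
          | linear_combination -hbd
          | linear_combination -hac)
    have hVU : MV * MU = 0 := by
      rw [hMU, hMV]; ext i j
      fin_cases i <;> fin_cases j <;>
        simp [Matrix.mul_apply, Fin.sum_univ_succ, -mul_eq_zero, -zero_eq_mul,
          -smul_eq_zero, smul_eq_mul, Matrix.vecHead, Matrix.vecTail, Function.comp] <;>
        (first
          | assumption
          | ring1
          | linear_combination hbc
          | linear_combination hbd
          | linear_combination hac
          | linear_combination -hbc
          | linear_combination -hbd
          | linear_combination -hac)
    have hU2 : MU * MU = a • MU + b • MV := by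
      rw [hMU, hMV]; ext i j
      fin_cases i <;> fin_cases j <;>
        simp [Matrix.mul_apply, Fin.sum_univ_succ, -mul_eq_zero, -zero_eq_mul,
          -smul_eq_zero, smul_eq_mul, Matrix.vecHead, Matrix.vecTail, Function.comp] <;>
        (first
          | assumption
          | ring1
          | linear_combination hbc
          | linear_combination hbd
          | linear_combination hac
          | linear_combination -hbc
          | linear_combination -hbd
          | linear_combination -hac)
    have hV2 : MV * MV = c • MU + d • MV := by
      rw [hMU, hMV]; ext i j
      fin_cases i <;> fin_cases j <;>
        simp [Matrix.mul_apply, Fin.sum_univ_succ, -mul_eq_zero, -zero_eq_mul,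
          -smul_eq_zero, smul_eq_mul, Matrix.vecHead, Matrix.vecTail, Function.comp] <;>
        (first
          | assumption
          | ring1
          | linear_combination hbc
          | linear_combination hbd
          | linear_combination hac
          | linear_combination -hbc
          | linear_combination -hbd
          | linear_combination -hac)
    set S := Algebra.adjoin K ({MU, MV} : Set (Matrix (Fin 3) (Fin 3) K)) with hS
    letI : CommRing S := Algebra.adjoinCommRingOfComm K (by
      rintro x (rfl | rfl) y (rfl | rfl)
      · rfl
      · rw [hUV, hVU]
      · rw [hUV, hVU]
      · rfl)
    set u' : S := ⟨MU, Algebra.subset_adjoin (by simp)⟩ with hu'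
    set v' : S := ⟨MV, Algebra.subset_adjoin (by simp)⟩ with hv'
    set Ψ : MvPolynomial (Fin 2) K →ₐ[K] Matrix (Fin 3) (Fin 3) K :=
      S.val.comp (aeval ![u', v']) with hΨ
    have hΨ0 : Ψ (X 0) = MU := by simp [hΨ, hu']
    have hΨ1 : Ψ (X 1) = MV := by simp [hΨ, hv']
    have hΨC : ∀ k : K, Ψ (C k) = k • (1 : Matrix (Fin 3) (Fin 3) K) := by
      intro k
      rw [hΨ, AlgHom.comp_apply, aeval_C, AlgHom.commutes, Algebra.algebraMap_eq_smul_one]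
    have hker : ∀ x ∈ I, Ψ x = 0 := by
      have hle : I ≤ RingHom.ker Ψ := by
        rw [hI, Ideal.span_le]
        rintro x (rfl | rfl | rfl) <;> rw [SetLike.mem_coe, RingHom.mem_ker]
        · rw [map_mul, hΨ0, hΨ1, hUV]
        · rw [map_sub, map_sub, map_pow, map_mul, map_mul, hΨ0, hΨ1, hΨC, hΨC,
            smul_mul_assoc, smul_mul_assoc, one_mul, one_mul, pow_two, hU2]
          abel
        · rw [map_sub, map_sub, map_pow, map_mul, map_mul, hΨ0, hΨ1, hΨC, hΨC,
            smul_mul_assoc, smul_mul_assoc, one_mul, one_mul, pow_two, hV2]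
          abel
      intro x hx
      have hx2 := hle hx
      rwa [RingHom.mem_ker] at hx2
    intro g hg
    have hmem : C (g 0) * X 0 + C (g 1) * X 1 ∈ I := by
      rw [← Ideal.Quotient.eq_zero_iff_mem, map_add, hsm, hsm]
      rw [Fin.sum_univ_two] at hg
      simpa using hg
    have hval : g 0 • MU + g 1 • MV = 0 := by
      have h2 := hker _ hmem
      rw [map_add, map_mul, map_mul, hΨ0, hΨ1, hΨC, hΨC,
        smul_mul_assoc, smul_mul_assoc, one_mul, one_mul] at h2
      exact h2
    have h10 := congrFun (congrFun hval 1) 0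
    have h20 := congrFun (congrFun hval 2) 0
    simp [hMU, hMV, -smul_eq_zero] at h10 h20
    intro i
    fin_cases i
    · exact h10
    · exact h20
end

section
/- Let A be a two-dimensional evolution algebra over a field K with natural basis e₁,e₂ (so e₁e₂ = e₂e₁ = 0) and e_i² = ω_{1i}e₁ + ω_{2i}e₂ for scalars ω_{ji} ∈ K. (i) If ω₁₂ = ω₂₂ = 0, then either A has zero product, or A admits a natural basis f₁,f₂ (f₁f₂ = f₂f₁ = 0) with f₁² = 0 and f₂² = f₁ (the algebra A₆), or one with f₁² = f₁ and f₂² = 0 (the algebra A₇). (ii) If ω₁₁ ≠ 0 and ω₂₁ = ω₁₂ = 0, then A admits a natural basis f₁,f₂ with f₁² = f₁ and f₂² = f₂ (the algebra A₁) or one with f₁² = f₁ and f₂² = 0 (the algebra A₇). -/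
section helpers
variable {K : Type*} [Field K] {A : Type*} [AddCommGroup A] [Module K A]

lemma pair_basis (e₁ e₂ : A) (hind : LinearIndependent K ![e₁, e₂])
    (hspan : Submodule.span K ({e₁, e₂} : Set A) = ⊤)
    (a b c : K) (ha : a ≠ 0) (hc : c ≠ 0) :
    LinearIndependent K ![a • e₁ + b • e₂, c • e₂] ∧
      Submodule.span K ({a • e₁ + b • e₂, c • e₂} : Set A) = ⊤ := by
  rw [LinearIndependent.pair_iff] at hind
  constructor
  · rw [LinearIndependent.pair_iff]
    intro s t hst
    have h2 : (s * a) • e₁ + (s * b + t * c) • e₂ = 0 := by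
      rw [← hst]; module
    obtain ⟨h3, h4⟩ := hind _ _ h2
    have hs : s = 0 := by
      rcases mul_eq_zero.mp h3 with h | h
      · exact h
      · exact absurd h ha
    subst hs
    refine ⟨rfl, ?_⟩
    simp only [zero_mul, zero_add] at h4
    rcases mul_eq_zero.mp h4 with h | h
    · exact h
    · exact absurd h hc
  · rw [eq_top_iff, ← hspan, Submodule.span_le]
    intro x hx
    have hm2 : e₂ ∈ Submodule.span K ({a • e₁ + b • e₂, c • e₂} : Set A) := by
      rw [Submodule.mem_span_pair]
      exact ⟨0, c⁻¹, by match_scalars <;> field_simp <;> ring⟩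
    have hm1 : e₁ ∈ Submodule.span K ({a • e₁ + b • e₂, c • e₂} : Set A) := by
      rw [Submodule.mem_span_pair]
      exact ⟨a⁻¹, -(a⁻¹ * b * c⁻¹), by match_scalars <;> field_simp <;> ring⟩
    rcases hx with h | h
    · exact h ▸ hm1
    · simp at h; exact h ▸ hm2

lemma pair_basis' (e₁ e₂ : A) (hind : LinearIndependent K ![e₁, e₂])
    (hspan : Submodule.span K ({e₁, e₂} : Set A) = ⊤)
    (c : K) (hc : c ≠ 0) :
    LinearIndependent K ![c • e₂, e₁] ∧
      Submodule.span K ({c • e₂, e₁} : Set A) = ⊤ := by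
  rw [LinearIndependent.pair_iff] at hind
  constructor
  · rw [LinearIndependent.pair_iff]
    intro s t hst
    have h2 : t • e₁ + (s * c) • e₂ = 0 := by rw [← hst]; module
    obtain ⟨h3, h4⟩ := hind _ _ h2
    have : s = 0 := by
      rcases mul_eq_zero.mp h4 with h | h
      · exact h
      · exact absurd h hc
    exact ⟨this, h3⟩
  · rw [eq_top_iff, ← hspan, Submodule.span_le]
    intro x hx
    have hm2 : e₂ ∈ Submodule.span K ({c • e₂, e₁} : Set A) := by
      rw [Submodule.mem_span_pair]
      exact ⟨c⁻¹, 0, by match_scalars <;> field_simp <;> ring⟩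
    have hm1 : e₁ ∈ Submodule.span K ({c • e₂, e₁} : Set A) := by
      rw [Submodule.mem_span_pair]
      exact ⟨0, 1, by match_scalars <;> field_simp <;> ring⟩
    rcases hx with h | h
    · exact h ▸ hm1
    · simp at h; exact h ▸ hm2

end helpers

lemma mul_expand {K : Type*} [Field K] {A : Type*} [NonUnitalNonAssocRing A]
    [Module K A] [SMulCommClass K A A] [IsScalarTower K A A]
    (x₁ x₂ y₁ y₂ : A) (a b c d : K) :
    (a • x₁ + b • x₂) * (c • y₁ + d • y₂) =
      (a * c) • (x₁ * y₁) + (a * d) • (x₁ * y₂) +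
      (b * c) • (x₂ * y₁) + (b * d) • (x₂ * y₂) := by
  simp only [add_mul, mul_add, smul_mul_assoc, mul_smul_comm, smul_smul, add_assoc]
  module

/-- Let `A` be a two-dimensional evolution algebra over a field `K`,
with natural basis `e₁, e₂` (`e₁e₂ = e₂e₁ = 0`) and `eᵢ² = ω₁ᵢe₁ + ω₂ᵢe₂`.
(i) If `ω₁₂ = ω₂₂ = 0`, then `A` has zero product, or admits a natural basis `f₁, f₂`
with `f₁² = 0, f₂² = f₁` (the algebra `A₆`), or one with `f₁² = f₁, f₂² = 0` (`A₇`).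
(ii) If `ω₁₁ ≠ 0` and `ω₂₁ = ω₁₂ = 0`, then `A` admits a natural basis with
`f₁² = f₁, f₂² = f₂` (`A₁`) or one with `f₁² = f₁, f₂² = 0` (`A₇`). -/
theorem stmt1 (K : Type*) [Field K] (A : Type*) [NonUnitalNonAssocRing A]
    [Module K A] [SMulCommClass K A A] [IsScalarTower K A A]
    (e₁ e₂ : A) (w11 w21 w12 w22 : K)
    (hind : LinearIndependent K ![e₁, e₂])
    (hspan : Submodule.span K ({e₁, e₂} : Set A) = ⊤)
    (h12 : e₁ * e₂ = 0) (h21 : e₂ * e₁ = 0)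
    (he1 : e₁ * e₁ = w11 • e₁ + w21 • e₂)
    (he2 : e₂ * e₂ = w12 • e₁ + w22 • e₂) :
    ((w12 = 0 ∧ w22 = 0) →
      ((∀ x y : A, x * y = 0) ∨
        (∃ f₁ f₂ : A, LinearIndependent K ![f₁, f₂] ∧
          Submodule.span K ({f₁, f₂} : Set A) = ⊤ ∧
          f₁ * f₂ = 0 ∧ f₂ * f₁ = 0 ∧ f₁ * f₁ = 0 ∧ f₂ * f₂ = f₁) ∨
        (∃ f₁ f₂ : A, LinearIndependent K ![f₁, f₂] ∧
          Submodule.span K ({f₁, f₂} : Set A) = ⊤ ∧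
          f₁ * f₂ = 0 ∧ f₂ * f₁ = 0 ∧ f₁ * f₁ = f₁ ∧ f₂ * f₂ = 0))) ∧
    ((w11 ≠ 0 ∧ w21 = 0 ∧ w12 = 0) →
      ((∃ f₁ f₂ : A, LinearIndependent K ![f₁, f₂] ∧
          Submodule.span K ({f₁, f₂} : Set A) = ⊤ ∧
          f₁ * f₂ = 0 ∧ f₂ * f₁ = 0 ∧ f₁ * f₁ = f₁ ∧ f₂ * f₂ = f₂) ∨
        (∃ f₁ f₂ : A, LinearIndependent K ![f₁, f₂] ∧
          Submodule.span K ({f₁, f₂} : Set A) = ⊤ ∧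
          f₁ * f₂ = 0 ∧ f₂ * f₁ = 0 ∧ f₁ * f₁ = f₁ ∧ f₂ * f₂ = 0))) := by
  constructor
  · rintro ⟨rfl, rfl⟩
    simp only [zero_smul, add_zero, zero_add] at he2
    -- he2 : e₂ * e₂ = 0
    by_cases hw11 : w11 = 0
    · subst hw11
      simp only [zero_smul, zero_add] at he1
      by_cases hw21 : w21 = 0
      · -- zero product
        subst hw21
        simp only [zero_smul] at he1
        left
        intro x y
        have hx : x ∈ Submodule.span K ({e₁, e₂} : Set A) := hspan ▸ Submodule.mem_top
        have hy : y ∈ Submodule.span K ({e₁, e₂} : Set A) := hspan ▸ Submodule.mem_top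
        rw [Submodule.mem_span_pair] at hx hy
        obtain ⟨a, b, rfl⟩ := hx
        obtain ⟨c, d, rfl⟩ := hy
        rw [mul_expand, he1, he2, h12, h21]
        simp
      · -- A₆ : f₁ = w21 • e₂, f₂ = e₁
        right; left
        obtain ⟨hi, hs⟩ := pair_basis' e₁ e₂ hind hspan w21 hw21
        refine ⟨w21 • e₂, e₁, hi, hs, ?_, ?_, ?_, ?_⟩
        · rw [smul_mul_assoc, h21, smul_zero]
        · rw [mul_smul_comm, h12, smul_zero]
        · rw [smul_mul_assoc, mul_smul_comm, he2, smul_zero, smul_zero]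
        · exact he1
    · -- A₇ : f₁ = w11⁻¹ • e₁ + (w21 * w11⁻¹ * w11⁻¹) • e₂, f₂ = e₂
      right; right
      obtain ⟨hi, hs⟩ := pair_basis e₁ e₂ hind hspan w11⁻¹ (w21 * w11⁻¹ * w11⁻¹) 1
        (inv_ne_zero hw11) one_ne_zero
      rw [one_smul] at hi hs
      refine ⟨w11⁻¹ • e₁ + (w21 * w11⁻¹ * w11⁻¹) • e₂, e₂, hi, hs, ?_, ?_, ?_, ?_⟩
      · rw [add_mul, smul_mul_assoc, smul_mul_assoc, h12, he2, smul_zero, smul_zero, add_zero]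
      · rw [mul_add, mul_smul_comm, mul_smul_comm, h21, he2, smul_zero, smul_zero, add_zero]
      · rw [mul_expand, he1, he2, h12, h21, smul_zero, smul_zero, smul_zero, add_zero,
          add_zero, add_zero]
        match_scalars <;> field_simp <;> ring
      · exact he2
  · rintro ⟨hw11, rfl, rfl⟩
    simp only [zero_smul, add_zero, zero_add] at he1 he2
    -- he1 : e₁ * e₁ = w11 • e₁, he2 : e₂ * e₂ = w22 • e₂
    by_cases hw22 : w22 = 0
    · -- A₇
      subst hw22
      simp only [zero_smul] at he2
      right
      obtain ⟨hi, hs⟩ := pair_basis e₁ e₂ hind hspan w11⁻¹ 0 1 (inv_ne_zero hw11) one_ne_zero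
      rw [one_smul, zero_smul, add_zero] at hi hs
      refine ⟨w11⁻¹ • e₁, e₂, hi, hs, ?_, ?_, ?_, ?_⟩
      · rw [smul_mul_assoc, h12, smul_zero]
      · rw [mul_smul_comm, h21, smul_zero]
      · rw [smul_mul_assoc, mul_smul_comm, he1, smul_smul, smul_smul]
        match_scalars; field_simp
      · exact he2
    · -- A₁
      left
      obtain ⟨hi, hs⟩ := pair_basis e₁ e₂ hind hspan w11⁻¹ 0 w22⁻¹ (inv_ne_zero hw11)
        (inv_ne_zero hw22)
      rw [zero_smul, add_zero] at hi hs
      refine ⟨w11⁻¹ • e₁, w22⁻¹ • e₂, hi, hs, ?_, ?_, ?_, ?_⟩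
      · rw [smul_mul_assoc, mul_smul_comm, h12, smul_zero, smul_zero]
      · rw [smul_mul_assoc, mul_smul_comm, h21, smul_zero, smul_zero]
      · rw [smul_mul_assoc, mul_smul_comm, he1, smul_smul, smul_smul]
        match_scalars; field_simp
      · rw [smul_mul_assoc, mul_smul_comm, he2, smul_smul, smul_smul]
        match_scalars; field_simp
end

section
/- Let K be a field, R = K[x,y,z,t], and * the K-algebra involution of R with x* = z and y* = t. Fix λ₀,λ₁,λ₂,λ₃ ∈ K, set p(u,v) = λ₀uv + λ₁u v* + λ₂u* v + λ₃u* v*, fix a 2×2 matrix (ω_{ji}) over K, and let I ⊲ R be the ideal generated by p(x,x) − ω₁₁x − ω₂₁y, p(y,y) − ω₁₂x − ω₂₂y, p(x,y), p(y,x) together with their images under *. If x − z ∈ I and y − t ∈ I, and if the residue classes x̄ and ȳ are K-linearly independent in R/I (i.e. the universal representation is faithful), then the two-dimensional evolution algebra A with natural basis e₁,e₂ (e₁e₂ = 0) and e_i² = ω₁ᵢe₁ + ω₂ᵢe₂ is associative. -/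
open MvPolynomial

/-- The involution `*` of `K[x,y,z,t]` with `x* = z`, `y* = t` (variables
`x = X 0`, `y = X 1`, `z = X 2`, `t = X 3`). -/
noncomputable def evStar (K : Type*) [CommRing K] :
    MvPolynomial (Fin 4) K →ₐ[K] MvPolynomial (Fin 4) K :=
  rename (![2, 3, 0, 1] : Fin 4 → Fin 4)

/-- The product `p(u,v) = λ₀uv + λ₁u v* + λ₂u* v + λ₃u* v*` on `K[x,y,z,t]`. -/
noncomputable def evP (K : Type*) [CommRing K] (l0 l1 l2 l3 : K)
    (u v : MvPolynomial (Fin 4) K) : MvPolynomial (Fin 4) K :=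
  C l0 * (u * v) + C l1 * (u * evStar K v) + C l2 * (evStar K u * v) +
    C l3 * (evStar K u * evStar K v)

/-- The ideal `I` generated by `p(x,x) − ω₁₁x − ω₂₁y`, `p(y,y) − ω₁₂x − ω₂₂y`,
`p(x,y)`, `p(y,x)`, together with their images under the involution. -/
noncomputable def evIdeal (K : Type*) [CommRing K] (l0 l1 l2 l3 w11 w21 w12 w22 : K) :
    Ideal (MvPolynomial (Fin 4) K) :=
  Ideal.span
    {evP K l0 l1 l2 l3 (X 0) (X 0) - C w11 * X 0 - C w21 * X 1,
     evP K l0 l1 l2 l3 (X 1) (X 1) - C w12 * X 0 - C w22 * X 1,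
     evP K l0 l1 l2 l3 (X 0) (X 1),
     evP K l0 l1 l2 l3 (X 1) (X 0),
     evStar K (evP K l0 l1 l2 l3 (X 0) (X 0) - C w11 * X 0 - C w21 * X 1),
     evStar K (evP K l0 l1 l2 l3 (X 1) (X 1) - C w12 * X 0 - C w22 * X 1),
     evStar K (evP K l0 l1 l2 l3 (X 0) (X 1)),
     evStar K (evP K l0 l1 l2 l3 (X 1) (X 0))}

/-- The two-dimensional evolution algebra with natural basis `e₁ = (1,0)`, `e₂ = (0,1)`
(`e₁e₂ = 0`) and `eᵢ² = ω₁ᵢe₁ + ω₂ᵢe₂`, realized on `K × K`. -/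
def evMul2 (K : Type*) [CommRing K] (w11 w21 w12 w22 : K) (a b : K × K) : K × K :=
  (w11 * (a.1 * b.1) + w12 * (a.2 * b.2), w21 * (a.1 * b.1) + w22 * (a.2 * b.2))

set_option maxHeartbeats 1600000 in
/-- If `x − z ∈ I` and `y − t ∈ I`, and the residue classes of `x` and
`y` are `K`-linearly independent in `R/I` (the universal representation is faithful),
then the associated two-dimensional evolution algebra is associative. -/
theorem stmt2 (K : Type*) [Field K] (l0 l1 l2 l3 w11 w21 w12 w22 : K)
    (hxz : X 0 - X 2 ∈ evIdeal K l0 l1 l2 l3 w11 w21 w12 w22)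
    (hyt : X 1 - X 3 ∈ evIdeal K l0 l1 l2 l3 w11 w21 w12 w22)
    (hfaithful : LinearIndependent K
      ![Ideal.Quotient.mk (evIdeal K l0 l1 l2 l3 w11 w21 w12 w22) (X 0),
        Ideal.Quotient.mk (evIdeal K l0 l1 l2 l3 w11 w21 w12 w22) (X 1)]) :
    ∀ a b c : K × K,
      evMul2 K w11 w21 w12 w22 (evMul2 K w11 w21 w12 w22 a b) c =
        evMul2 K w11 w21 w12 w22 a (evMul2 K w11 w21 w12 w22 b c) := by
  set I := evIdeal K l0 l1 l2 l3 w11 w21 w12 w22 with hIdef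
  set q := Ideal.Quotient.mk I with hq
  have hz : q (X 2) = q (X 0) := by
    rw [Ideal.Quotient.mk_eq_mk_iff_sub_mem]
    simpa using I.neg_mem hxz
  have ht : q (X 3) = q (X 1) := by
    rw [Ideal.Quotient.mk_eq_mk_iff_sub_mem]
    simpa using I.neg_mem hyt
  have hsmul : ∀ (s : K) (v : MvPolynomial (Fin 4) K ⧸ I), s • v = q (C s) * v := by
    intro s v
    obtain ⟨p, rfl⟩ := Ideal.Quotient.mk_surjective v
    rw [← hq, ← map_mul, ← smul_eq_C_mul]
    rfl
  have hpair := LinearIndependent.pair_iff.mp hfaithful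
  have g1 : evP K l0 l1 l2 l3 (X 0) (X 0) - C w11 * X 0 - C w21 * X 1 ∈ I :=
    Ideal.subset_span (by simp)
  have g2 : evP K l0 l1 l2 l3 (X 1) (X 1) - C w12 * X 0 - C w22 * X 1 ∈ I :=
    Ideal.subset_span (by simp)
  have g3 : evP K l0 l1 l2 l3 (X 0) (X 1) ∈ I :=
    Ideal.subset_span (by simp)
  have H1 := (Ideal.Quotient.eq_zero_iff_mem).mpr g1
  have H2 := (Ideal.Quotient.eq_zero_iff_mem).mpr g2
  have H3 := (Ideal.Quotient.eq_zero_iff_mem).mpr g3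
  rw [← hq] at H1 H2 H3
  simp only [evP, evStar, rename_X, Matrix.cons_val_zero, Matrix.cons_val_one,
    Matrix.head_cons, map_add, map_sub, map_mul] at H1 H2 H3
  simp only [hz, ht] at H1 H2 H3
  set e1 := q (X 0) with he1
  set e2 := q (X 1) with he2
  clear hz ht g1 g2 g3 hxz hyt hfaithful hIdef hq he1 he2
  clear_value e1 e2
  have hC : ∀ s : K, q (C s) = algebraMap K _ s := fun s => rfl
  simp only [hC] at H1 H2 H3
  have hpair' : ∀ s t : K,
      algebraMap K (MvPolynomial (Fin 4) K ⧸ I) s * e1 +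
        algebraMap K (MvPolynomial (Fin 4) K ⧸ I) t * e2 = 0 → s = 0 ∧ t = 0 := by
    intro s t h
    exact hpair s t (by rw [hsmul, hsmul, hC, hC]; exact h)
  clear hsmul hC hpair
  clear_value q
  clear q
  clear_value I
  generalize (algebraMap K (MvPolynomial (Fin 4) K ⧸ I) l0) = A0 at H1 H2 H3
  generalize (algebraMap K (MvPolynomial (Fin 4) K ⧸ I) l1) = A1 at H1 H2 H3
  generalize (algebraMap K (MvPolynomial (Fin 4) K ⧸ I) l2) = A2 at H1 H2 H3
  generalize (algebraMap K (MvPolynomial (Fin 4) K ⧸ I) l3) = A3 at H1 H2 H3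
  generalize hB1 : (algebraMap K (MvPolynomial (Fin 4) K ⧸ I) w11) = B1 at H1
  generalize hB2 : (algebraMap K (MvPolynomial (Fin 4) K ⧸ I) w21) = B2 at H1
  generalize hB3 : (algebraMap K (MvPolynomial (Fin 4) K ⧸ I) w12) = B3 at H2
  generalize hB4 : (algebraMap K (MvPolynomial (Fin 4) K ⧸ I) w22) = B4 at H2
  have key1 := hpair' (w12 * w21) (w22 * w21) (by
    rw [map_mul, map_mul, hB2, hB3, hB4]
    linear_combination
      (-B2) * H2 + (-((A0 + A1 + A2 + A3) * e2)) * H1 +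
        ((A0 + A1 + A2 + A3) * e1 - B1) * H3)
  have key2 := hpair' (w11 * w12) (w21 * w12) (by
    rw [map_mul, map_mul, hB1, hB2, hB3]
    linear_combination
      (-B3) * H1 + (-((A0 + A1 + A2 + A3) * e1)) * H2 +
        ((A0 + A1 + A2 + A3) * e2 - B4) * H3)
  obtain ⟨k1, k2⟩ := key1
  obtain ⟨k3, k4⟩ := key2
  intro a b c
  obtain ⟨a1, a2⟩ := a; obtain ⟨b1, b2⟩ := b; obtain ⟨c1, c2⟩ := c
  simp only [evMul2, Prod.mk.injEq]
  constructor
  · linear_combination (a2 * b2 * c1 - a1 * b2 * c2) * k3 + (a1 * b1 * c2 - a2 * b1 * c1) * k4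
  · linear_combination (a2 * b2 * c1 - a1 * b2 * c2) * k4 + (a1 * b1 * c2 - a2 * b1 * c1) * k2
end

section
/- Let K be a field, R = K[x,y,z,t], and * the K-algebra involution of R with x* = z and y* = t. Fix λ₀,λ₁,λ₂,λ₃ ∈ K, set p(u,v) = λ₀uv + λ₁u v* + λ₂u* v + λ₃u* v*, fix a 2×2 matrix (ω_{ji}) over K with det(ω_{ji}) ≠ 0 (so that the associated evolution algebra is perfect), and let I ⊲ R be the ideal generated by p(x,x) − ω₁₁x − ω₂₁y, p(y,y) − ω₁₂x − ω₂₂y, p(x,y), p(y,x) together with their images under *. If x² − z² ∈ I and y² − t² ∈ I, and if the residue classes x̄ and ȳ are K-linearly independent in R/I, then the two-dimensional evolution algebra A with natural basis e₁,e₂ (e₁e₂ = 0) and e_i² = ω₁ᵢe₁ + ω₂ᵢe₂ is associative. -/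
open MvPolynomial

set_option maxHeartbeats 1000000 in
theorem evKey (K : Type*) [Field K] (l0 l1 l2 l3 w11 w21 w12 w22 : K)
    (hdet : w11 * w22 - w12 * w21 ≠ 0)
    (hxz : X 0 ^ 2 - X 2 ^ 2 ∈ evIdeal K l0 l1 l2 l3 w11 w21 w12 w22)
    (hyt : X 1 ^ 2 - X 3 ^ 2 ∈ evIdeal K l0 l1 l2 l3 w11 w21 w12 w22)
    (hfaithful : LinearIndependent K
      ![Ideal.Quotient.mk (evIdeal K l0 l1 l2 l3 w11 w21 w12 w22) (X 0),
        Ideal.Quotient.mk (evIdeal K l0 l1 l2 l3 w11 w21 w12 w22) (X 1)]) :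
    w21 * w12 = 0 ∧ w21 * w22 = 0 ∧ w12 * w11 = 0 ∧ w12 * w21 = 0 := by
  set R := MvPolynomial (Fin 4) K
  set I := evIdeal K l0 l1 l2 l3 w11 w21 w12 w22 with hIdef
  set mk := Ideal.Quotient.mk I with hmk
  have hs0 : evStar K (X 0 : R) = X 2 := by simp [evStar]
  have hs1 : evStar K (X 1 : R) = X 3 := by simp [evStar]
  have hs2 : evStar K (X 2 : R) = X 0 := by simp [evStar]
  have hs3 : evStar K (X 3 : R) = X 1 := by simp [evStar]
  have hsC : ∀ k : K, evStar K (C k : R) = C k := fun k => by simp [evStar]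
  have hz : ∀ g : R, g ∈ ({evP K l0 l1 l2 l3 (X 0) (X 0) - C w11 * X 0 - C w21 * X 1,
     evP K l0 l1 l2 l3 (X 1) (X 1) - C w12 * X 0 - C w22 * X 1,
     evP K l0 l1 l2 l3 (X 0) (X 1),
     evP K l0 l1 l2 l3 (X 1) (X 0),
     evStar K (evP K l0 l1 l2 l3 (X 0) (X 0) - C w11 * X 0 - C w21 * X 1),
     evStar K (evP K l0 l1 l2 l3 (X 1) (X 1) - C w12 * X 0 - C w22 * X 1),
     evStar K (evP K l0 l1 l2 l3 (X 0) (X 1)),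
     evStar K (evP K l0 l1 l2 l3 (X 1) (X 0))} : Set R) → mk g = 0 := fun g hg =>
    Ideal.Quotient.eq_zero_iff_mem.mpr (Ideal.subset_span hg)
  have h1 := hz _ (by left; rfl)
  have h2 := hz _ (by right; left; rfl)
  have h3 := hz _ (by right; right; left; rfl)
  have h1s := hz _ (by right; right; right; right; left; rfl)
  have h2s := hz _ (by right; right; right; right; right; left; rfl)
  simp only [evP, hs0, hs1, hs2, hs3, hsC, map_sub, map_add, map_mul] at h1 h2 h3 h1s h2s
  have hx : mk (X 0) * mk (X 0) - mk (X 2) * mk (X 2) = 0 := by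
    have h := Ideal.Quotient.eq_zero_iff_mem.mpr hxz
    simp only [map_sub, map_pow, ← hmk] at h
    linear_combination h
  have hy : mk (X 1) * mk (X 1) - mk (X 3) * mk (X 3) = 0 := by
    have h := Ideal.Quotient.eq_zero_iff_mem.mpr hyt
    simp only [map_sub, map_pow, ← hmk] at h
    linear_combination h
  have e1 : mk (C w11) * (mk (X 0) - mk (X 2)) + mk (C w21) * (mk (X 1) - mk (X 3)) = 0 := by
    linear_combination h1s - h1 + mk (C l0) * hx - mk (C l3) * hx
  have e2 : mk (C w12) * (mk (X 0) - mk (X 2)) + mk (C w22) * (mk (X 1) - mk (X 3)) = 0 := by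
    linear_combination h2s - h2 + mk (C l0) * hy - mk (C l3) * hy
  have hCinv : ∀ u : MvPolynomial (Fin 4) K ⧸ I,
      mk (C w11) * mk (C w22) * u - mk (C w12) * mk (C w21) * u = 0 → u = 0 := by
    intro u hu
    have key : mk (C (w11 * w22 - w12 * w21)) * u = 0 := by
      have hc : mk (C (w11 * w22 - w12 * w21)) =
          mk (C w11) * mk (C w22) - mk (C w12) * mk (C w21) := by
        simp only [map_sub, map_mul]
      rw [hc]; linear_combination hu
    calc u = mk (C ((w11 * w22 - w12 * w21)⁻¹ * (w11 * w22 - w12 * w21))) * u := by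
            rw [inv_mul_cancel₀ hdet, C_1, map_one, one_mul]
      _ = mk (C ((w11 * w22 - w12 * w21)⁻¹)) * (mk (C (w11 * w22 - w12 * w21)) * u) := by
            rw [C_mul, map_mul, mul_assoc]
      _ = 0 := by rw [key, mul_zero]
  have hAC : mk (X 2) = mk (X 0) := by
    have h := hCinv (mk (X 0) - mk (X 2))
      (by linear_combination mk (C w22) * e1 - mk (C w21) * e2)
    linear_combination -h
  have hBD : mk (X 3) = mk (X 1) := by
    have h := hCinv (mk (X 1) - mk (X 3))
      (by linear_combination mk (C w11) * e2 - mk (C w12) * e1)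
    linear_combination -h
  rw [hAC] at h1 h3
  rw [hBD] at h2 h3
  have halg : ∀ k : K, algebraMap K (MvPolynomial (Fin 4) K ⧸ I) k = mk (C k) := fun k => by
    rw [IsScalarTower.algebraMap_apply K (MvPolynomial (Fin 4) K) (MvPolynomial (Fin 4) K ⧸ I),
      Ideal.Quotient.algebraMap_eq, MvPolynomial.algebraMap_eq]
  have hind : ∀ k1 k2 : K, mk (C k1) * mk (X 0) + mk (C k2) * mk (X 1) = 0 →
      k1 = 0 ∧ k2 = 0 := by
    intro k1 k2 hk
    have hsmul : ∀ (k : K) (p : MvPolynomial (Fin 4) K), k • mk p = mk (C k) * mk p :=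
      fun k p => by
        rw [hmk, ← Ideal.Quotient.mkₐ_eq_mk (R₁ := K), ← map_smul,
          MvPolynomial.smul_eq_C_mul, map_mul]
    have h := Fintype.linearIndependent_iff.mp hfaithful ![k1, k2] ?_
    · exact ⟨h 0, h 1⟩
    · have hx0 : k1 • mk (X 0) + k2 • mk (X 1) = 0 := by
        rw [hsmul, hsmul]; exact hk
      simpa [Fin.sum_univ_two] using hx0
  have key1 : mk (C (w21 * w12)) * mk (X 0) + mk (C (w21 * w22)) * mk (X 1) = 0 := by
    rw [C_mul, map_mul, C_mul, map_mul]
    linear_combination (-(mk (C w21))) * h2 -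
      ((mk (C l0) + mk (C l1) + mk (C l2) + mk (C l3)) * mk (X 1)) * h1 +
      ((mk (C l0) + mk (C l1) + mk (C l2) + mk (C l3)) * mk (X 0) - mk (C w11)) * h3
  have key2 : mk (C (w12 * w11)) * mk (X 0) + mk (C (w12 * w21)) * mk (X 1) = 0 := by
    rw [C_mul, map_mul, C_mul, map_mul]
    linear_combination (-(mk (C w12))) * h1 -
      ((mk (C l0) + mk (C l1) + mk (C l2) + mk (C l3)) * mk (X 0)) * h2 +
      ((mk (C l0) + mk (C l1) + mk (C l2) + mk (C l3)) * mk (X 1) - mk (C w22)) * h3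
  obtain ⟨p1, p2⟩ := hind _ _ key1
  obtain ⟨p3, p4⟩ := hind _ _ key2
  exact ⟨p1, p2, p3, p4⟩

/-- Suppose the structure matrix `(ω_{ji})` is invertible (the evolution
algebra is perfect).  If `x² − z² ∈ I` and `y² − t² ∈ I`, and the residue classes of `x`
and `y` are `K`-linearly independent in `R/I` (the universal representation is faithful),
then the associated two-dimensional evolution algebra is associative. -/
theorem stmt3 (K : Type*) [Field K] (l0 l1 l2 l3 w11 w21 w12 w22 : K)
    (hdet : w11 * w22 - w12 * w21 ≠ 0)
    (hxz : X 0 ^ 2 - X 2 ^ 2 ∈ evIdeal K l0 l1 l2 l3 w11 w21 w12 w22)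
    (hyt : X 1 ^ 2 - X 3 ^ 2 ∈ evIdeal K l0 l1 l2 l3 w11 w21 w12 w22)
    (hfaithful : LinearIndependent K
      ![Ideal.Quotient.mk (evIdeal K l0 l1 l2 l3 w11 w21 w12 w22) (X 0),
        Ideal.Quotient.mk (evIdeal K l0 l1 l2 l3 w11 w21 w12 w22) (X 1)]) :
    ∀ a b c : K × K,
      evMul2 K w11 w21 w12 w22 (evMul2 K w11 w21 w12 w22 a b) c =
        evMul2 K w11 w21 w12 w22 a (evMul2 K w11 w21 w12 w22 b c) := by
  obtain ⟨p1, p2, p3, p4⟩ := evKey K l0 l1 l2 l3 w11 w21 w12 w22 hdet hxz hyt hfaithful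
  intro a b c
  simp only [evMul2, Prod.mk.injEq]
  constructor
  · linear_combination (a.2 * b.2 * c.1 - a.1 * b.2 * c.2) * p3 +
      (a.1 * b.1 * c.2 - a.2 * b.1 * c.1) * p4
  · linear_combination (a.2 * b.2 * c.1 - a.1 * b.2 * c.2) * p1 +
      (a.1 * b.1 * c.2 - a.2 * b.1 * c.1) * p2
end

section
/- Let K be a field and α ∈ K with α ≠ 0. For all scalars λ₀,λ₁,λ₂,λ₃ ∈ K, every commutative associative (not necessarily unital) K-algebra B equipped with a K-linear involution *, and all elements u,v ∈ B satisfying p(u,u) = αv, p(v,v) = u + v, p(u,v) = 0 and p(v,u) = 0, the elements u and v are K-linearly dependent. (Equivalently: the evolution algebra A_{4,α}, with natural basis e₁,e₂, e₁e₂ = 0, e₁² = αe₂, e₂² = e₁ + e₂, has no faithful associative and commutative representation.) -/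
/-- Uniform lemma: if `e = X·YS − XS·Y = 0` then `a·Y = 0`. -/
private theorem stmt5_auxU {C : Type*} [CommRing C] (a c0 c1 c2 c3 X Y XS YS : C)
    (H1 : c0*(X*X) + c1*(X*XS) + c2*(XS*X) + c3*(XS*XS) = a*Y)
    (H2 : c0*(Y*Y) + c1*(Y*YS) + c2*(YS*Y) + c3*(YS*YS) = X + Y)
    (H3 : c0*(X*Y) + c1*(X*YS) + c2*(XS*Y) + c3*(XS*YS) = 0)
    (H4 : c0*(X*Y) + c2*(X*YS) + c1*(XS*Y) + c3*(XS*YS) = 0)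
    (H6 : c0*(YS*YS) + c1*(YS*Y) + c2*(Y*YS) + c3*(Y*Y) = XS + YS)
    (H7 : c0*(XS*YS) + c1*(XS*Y) + c2*(X*YS) + c3*(X*Y) = 0)
    (H8 : c0*(XS*YS) + c1*(X*YS) + c2*(XS*Y) + c3*(X*Y) = 0)
    (hE : X*YS = XS*Y) : a*Y = 0 := by
  linear_combination (-1 : C)*H1 - c0*(X*H2 - Y*H4) - (c1+c2)*(X*H6 - Y*H8)
    - c3*(XS*H6 - YS*H7) - H3
    + (c0*(c1*Y + c3*YS) + (c1+c2)*(c2*Y + c0*YS) - c3*(c3*Y + c2*YS) - c2)*hE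

/-- Case `l1 = l2 = m`, the identity `e = (c0+cm)·(Y+YS)·e`. -/
private theorem stmt5_auxF2 {C : Type*} [CommRing C] (cm c0 c3 X Y XS YS : C)
    (H2 : c0*(Y*Y) + cm*(Y*YS) + cm*(YS*Y) + c3*(YS*YS) = X + Y)
    (H3 : c0*(X*Y) + cm*(X*YS) + cm*(XS*Y) + c3*(XS*YS) = 0)
    (H6 : c0*(YS*YS) + cm*(YS*Y) + cm*(Y*YS) + c3*(Y*Y) = XS + YS)
    (H7 : c0*(XS*YS) + cm*(XS*Y) + cm*(X*YS) + c3*(X*Y) = 0) :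
    X*YS - XS*Y = (c0+cm)*((Y+YS)*(X*YS - XS*Y)) := by
  obtain ⟨e, he⟩ : ∃ x, x = X*YS - XS*Y := ⟨_, rfl⟩
  have s1 : X*XS + X*YS = (cm*Y + c0*YS)*e := by
    linear_combination (-1 : C)*(X*H6 - Y*H7) - (cm*Y + c0*YS)*he
  have s2 : X*XS + XS*Y = -((c0*Y + cm*YS)*e) := by
    linear_combination (-1 : C)*(XS*H2 - YS*H3) + (c0*Y + cm*YS)*he
  have F2 : e = (c0+cm)*((Y+YS)*e) := by linear_combination s1 - s2 + he
  rw [he] at F2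
  linear_combination F2

/-- Case `l1 = l2 = m` with `n = c0+cm` cancellable: `a·(a·e) = 0`. -/
private theorem stmt5_auxB {C : Type*} [CommRing C] (a cm c0 c3 X Y XS YS : C)
    (H1 : c0*(X*X) + cm*(X*XS) + cm*(XS*X) + c3*(XS*XS) = a*Y)
    (H2 : c0*(Y*Y) + cm*(Y*YS) + cm*(YS*Y) + c3*(YS*YS) = X + Y)
    (H3 : c0*(X*Y) + cm*(X*YS) + cm*(XS*Y) + c3*(XS*YS) = 0)
    (H5 : c0*(XS*XS) + cm*(XS*X) + cm*(X*XS) + c3*(X*X) = a*YS)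
    (H6 : c0*(YS*YS) + cm*(YS*Y) + cm*(Y*YS) + c3*(Y*Y) = XS + YS)
    (H7 : c0*(XS*YS) + cm*(XS*Y) + cm*(X*YS) + c3*(X*Y) = 0)
    (hn : ∀ x : C, (c0+cm)*x = 0 → x = 0) :
    a*(a*(X*YS - XS*Y)) = 0 := by
  obtain ⟨e, he⟩ : ∃ x, x = X*YS - XS*Y := ⟨_, rfl⟩
  have s1 : X*XS + X*YS = (cm*Y + c0*YS)*e := by
    linear_combination (-1 : C)*(X*H6 - Y*H7) - (cm*Y + c0*YS)*he
  have s2 : X*XS + XS*Y = -((c0*Y + cm*YS)*e) := by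
    linear_combination (-1 : C)*(XS*H2 - YS*H3) + (c0*Y + cm*YS)*he
  have F2 : e = (c0+cm)*((Y+YS)*e) := by linear_combination s1 - s2 + he
  have F5 : a*(Y*Y) = -((cm*X + c3*XS)*e) := by
    linear_combination (-1 : C)*(Y*H1 - X*H3) + (cm*X + c3*XS)*he
  have F6 : a*(Y*YS) = -((cm*X + c0*XS)*e) := by
    linear_combination (-1 : C)*(Y*H5 - X*H7) + (cm*X + c0*XS)*he
  have F6b : a*(Y*YS) = (c0*X + cm*XS)*e := by
    linear_combination (-1 : C)*(YS*H1 - XS*H3) - (c0*X + cm*XS)*he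
  have F7 : a*(YS*YS) = (cm*XS + c3*X)*e := by
    linear_combination (-1 : C)*(YS*H5 - XS*H7) - (cm*XS + c3*X)*he
  have F1 : (c0+cm)*((X+XS)*e) = 0 := by linear_combination F6 - F6b
  have F1p : (X+XS)*e = 0 := hn _ F1
  have F3 : X*e = (c0+cm)*(e*e) := by
    linear_combination X*F2 + (c0+cm)*Y*F1p - (c0+cm)*e*he
  have F4 : XS*e = -((c0+cm)*(e*e)) := by linear_combination F1p - F3
  have F8 : a*(Y*e) = ((c0+cm)*(c0+cm)*(c0+c3-2*cm))*(e*e*e) := by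
    linear_combination (a*Y)*F2 + (c0+cm)*e*F5 + (c0+cm)*e*F6
      - 2*cm*(c0+cm)*(e*F3) - (c0+cm)*(c0+c3)*(e*F4)
  have F9 : a*(YS*e) = ((c0+cm)*(c0+cm)*(c0+c3-2*cm))*(e*e*e) := by
    linear_combination (a*YS)*F2 + (c0+cm)*e*F6b + (c0+cm)*e*F7
      + (c0+cm)*(c0+c3)*(e*F3) + 2*cm*(c0+cm)*(e*F4)
  have F10 : a*e = (2*((c0+cm)*((c0+cm)*(c0+cm)*(c0+c3-2*cm))))*(e*e*e) := by
    linear_combination a*F2 + (c0+cm)*F8 + (c0+cm)*F9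
  have F12 : (c0+cm)*((c3*c3 + c0*c3 + cm*(c0-c3) - 2*cm*cm)*(e*e*e))
      = ((c0+cm)*(c0+cm)*(c0+c3-2*cm))*(e*e*e)
        + (2*((c0+cm)*(c0+cm)*((c0+cm)*(c0+cm)*(c0+c3-2*cm))))*(e*e*e*e) := by
    linear_combination (a*e)*H2 - c0*(e*F5) - 2*cm*(e*F6) - c3*(e*F7)
      + (2*cm*cm - c3*c3 + c0*cm)*(e*F3) + (2*c0*cm + c0*c3 - cm*c3)*(e*F4)
      + a*F3 + F8 + (c0+cm)*(e*F10)
  have F13 : (c0+cm)*((c3*c3 + c0*c3 + cm*(c0-c3) - 2*cm*cm)*(e*e*e))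
      = ((c0+cm)*(c0+cm)*(c0+c3-2*cm))*(e*e*e)
        - (2*((c0+cm)*(c0+cm)*((c0+cm)*(c0+cm)*(c0+c3-2*cm))))*(e*e*e*e) := by
    linear_combination (a*e)*H6 - c3*(e*F5) - 2*cm*(e*F6b) - c0*(e*F7)
      + (-(2*c0*cm) - c0*c3 + cm*c3)*(e*F3) + (-(2*cm*cm) + c3*c3 - c0*cm)*(e*F4)
      + a*F4 + F9 - (c0+cm)*(e*F10)
  have F14 : (4*((c0+cm)*(c0+cm)*((c0+cm)*(c0+cm)*(c0+c3-2*cm))))*(e*e*e*e) = 0 := by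
    linear_combination F13 - F12
  have F15 : a*(a*e) = 0 := by
    linear_combination a*F10 + (2*((c0+cm)*((c0+cm)*(c0+cm)*(c0+c3-2*cm))))*((e*e)*F10)
      + ((c0+cm)*(c0+cm)*(c0+c3-2*cm))*(e*F14)
  rw [he] at F15
  exact F15

private theorem stmt5_main {K : Type*} [Field K] {C : Type*} [CommRing C]
    (f : K →+* C) (hf : ∀ c : K, c ≠ 0 → ∀ x : C, f c * x = 0 → x = 0)
    (α l0 l1 l2 l3 : K) (hα : α ≠ 0) (X Y XS YS : C)
    (H1 : f l0*(X*X) + f l1*(X*XS) + f l2*(XS*X) + f l3*(XS*XS) = f α*Y)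
    (H2 : f l0*(Y*Y) + f l1*(Y*YS) + f l2*(YS*Y) + f l3*(YS*YS) = X + Y)
    (H3 : f l0*(X*Y) + f l1*(X*YS) + f l2*(XS*Y) + f l3*(XS*YS) = 0)
    (H4 : f l0*(X*Y) + f l2*(X*YS) + f l1*(XS*Y) + f l3*(XS*YS) = 0)
    (H5 : f l0*(XS*XS) + f l1*(XS*X) + f l2*(X*XS) + f l3*(X*X) = f α*YS)
    (H6 : f l0*(YS*YS) + f l1*(YS*Y) + f l2*(Y*YS) + f l3*(Y*Y) = XS + YS)
    (H7 : f l0*(XS*YS) + f l1*(XS*Y) + f l2*(X*YS) + f l3*(X*Y) = 0)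
    (H8 : f l0*(XS*YS) + f l1*(X*YS) + f l2*(XS*Y) + f l3*(X*Y) = 0) :
    f α * Y = 0 := by
  have hE : X*YS = XS*Y := by
    by_cases h12 : l1 = l2
    · subst h12
      by_cases hn : l0 + l1 = 0
      · have h2' := stmt5_auxF2 (f l1) (f l0) (f l3) X Y XS YS H2 H3 H6 H7
        have hz : f l0 + f l1 = 0 := by rw [← map_add, hn, map_zero]
        rw [hz, zero_mul] at h2'
        exact sub_eq_zero.mp h2'
      · have hcan : ∀ x : C, (f l0 + f l1) * x = 0 → x = 0 := by
          intro x hx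
          exact hf (l0+l1) hn x (by rw [map_add]; exact hx)
        have h15 := stmt5_auxB (f α) (f l1) (f l0) (f l3) X Y XS YS H1 H2 H3 H5 H6 H7 hcan
        exact sub_eq_zero.mp (hf α hα _ (hf α hα _ h15))
    · have hd : f (l1 - l2) * (X*YS - XS*Y) = 0 := by
        rw [map_sub]; linear_combination H3 - H4
      exact sub_eq_zero.mp (hf _ (sub_ne_zero.2 h12) _ hd)
  exact stmt5_auxU (f α) (f l0) (f l1) (f l2) (f l3) X Y XS YS H1 H2 H3 H4 H6 H7 H8 hE

/-- The evolution algebra `A_{4,α}` (`e₁² = αe₂`, `e₂² = e₁ + e₂`,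
`e₁e₂ = 0`, `α ≠ 0`) has no faithful associative and commutative representation:
for all scalars `λ₀,λ₁,λ₂,λ₃`, every commutative associative (not necessarily unital)
`K`-algebra `B` with a `K`-linear involution `s`, and all `u, v ∈ B` satisfying
`p(u,u) = αv`, `p(v,v) = u + v`, `p(u,v) = 0`, `p(v,u) = 0`
(where `p(u,v) = λ₀uv + λ₁u·v* + λ₂u*·v + λ₃u*·v*`), the elements `u` and `v` are
`K`-linearly dependent. -/
theorem stmt5 (K : Type*) [Field K] (α : K) (hα : α ≠ 0)
    (l0 l1 l2 l3 : K)
    (B : Type*) [NonUnitalCommRing B] [Module K B]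
    [SMulCommClass K B B] [IsScalarTower K B B]
    (s : B →ₗ[K] B)
    (hsmul : ∀ x y : B, s (x * y) = s x * s y)
    (hsinv : ∀ x : B, s (s x) = x)
    (u v : B)
    (huu : l0 • (u * u) + l1 • (u * s u) + l2 • (s u * u) + l3 • (s u * s u) = α • v)
    (hvv : l0 • (v * v) + l1 • (v * s v) + l2 • (s v * v) + l3 • (s v * s v) = u + v)
    (huv : l0 • (u * v) + l1 • (u * s v) + l2 • (s u * v) + l3 • (s u * s v) = 0)
    (hvu : l0 • (v * u) + l1 • (v * s u) + l2 • (s v * u) + l3 • (s v * s u) = 0) :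
    ¬ LinearIndependent K ![u, v] := by
  intro hli
  have k1 := congrArg s huu
  have k2 := congrArg s hvv
  have k3 := congrArg s huv
  have k4 := congrArg s hvu
  simp only [map_add, map_smul, map_zero, hsmul, hsinv] at k1 k2 k3 k4
  have m1 := congrArg (fun x : B => (x : Unitization K B)) huu
  have m2 := congrArg (fun x : B => (x : Unitization K B)) hvv
  have m3 := congrArg (fun x : B => (x : Unitization K B)) huv
  have m4 := congrArg (fun x : B => (x : Unitization K B)) hvu
  have n1 := congrArg (fun x : B => (x : Unitization K B)) k1
  have n2 := congrArg (fun x : B => (x : Unitization K B)) k2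
  have n3 := congrArg (fun x : B => (x : Unitization K B)) k3
  have n4 := congrArg (fun x : B => (x : Unitization K B)) k4
  simp only [Unitization.inr_add, Unitization.inr_mul, Unitization.inr_smul,
    Unitization.inr_zero, Algebra.smul_def] at m1 m2 m3 m4 n1 n2 n3 n4
  have hf : ∀ c : K, c ≠ 0 → ∀ x : Unitization K B,
      algebraMap K (Unitization K B) c * x = 0 → x = 0 := by
    intro c hc x hx
    have h1 : algebraMap K (Unitization K B) c⁻¹ *
        (algebraMap K (Unitization K B) c * x) = x := by
      rw [← mul_assoc, ← map_mul, inv_mul_cancel₀ hc, map_one, one_mul]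
    rw [hx, mul_zero] at h1
    exact h1.symm
  have H1 : algebraMap K (Unitization K B) l0 * ((u : Unitization K B) * (u : Unitization K B))
      + algebraMap K (Unitization K B) l1 * ((u : Unitization K B) * ((s u : B) : Unitization K B))
      + algebraMap K (Unitization K B) l2 * (((s u : B) : Unitization K B) * (u : Unitization K B))
      + algebraMap K (Unitization K B) l3 * (((s u : B) : Unitization K B) * ((s u : B) : Unitization K B))
      = algebraMap K (Unitization K B) α * (v : Unitization K B) := by
    linear_combination m1
  have H2 : algebraMap K (Unitization K B) l0 * ((v : Unitization K B) * (v : Unitization K B))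
      + algebraMap K (Unitization K B) l1 * ((v : Unitization K B) * ((s v : B) : Unitization K B))
      + algebraMap K (Unitization K B) l2 * (((s v : B) : Unitization K B) * (v : Unitization K B))
      + algebraMap K (Unitization K B) l3 * (((s v : B) : Unitization K B) * ((s v : B) : Unitization K B))
      = (u : Unitization K B) + (v : Unitization K B) := by
    linear_combination m2
  have H3 : algebraMap K (Unitization K B) l0 * ((u : Unitization K B) * (v : Unitization K B))
      + algebraMap K (Unitization K B) l1 * ((u : Unitization K B) * ((s v : B) : Unitization K B))
      + algebraMap K (Unitization K B) l2 * (((s u : B) : Unitization K B) * (v : Unitization K B))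
      + algebraMap K (Unitization K B) l3 * (((s u : B) : Unitization K B) * ((s v : B) : Unitization K B))
      = 0 := by
    linear_combination m3
  have H4 : algebraMap K (Unitization K B) l0 * ((u : Unitization K B) * (v : Unitization K B))
      + algebraMap K (Unitization K B) l2 * ((u : Unitization K B) * ((s v : B) : Unitization K B))
      + algebraMap K (Unitization K B) l1 * (((s u : B) : Unitization K B) * (v : Unitization K B))
      + algebraMap K (Unitization K B) l3 * (((s u : B) : Unitization K B) * ((s v : B) : Unitization K B))
      = 0 := by
    linear_combination m4
  have H5 : algebraMap K (Unitization K B) l0 * (((s u : B) : Unitization K B) * ((s u : B) : Unitization K B))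
      + algebraMap K (Unitization K B) l1 * (((s u : B) : Unitization K B) * (u : Unitization K B))
      + algebraMap K (Unitization K B) l2 * ((u : Unitization K B) * ((s u : B) : Unitization K B))
      + algebraMap K (Unitization K B) l3 * ((u : Unitization K B) * (u : Unitization K B))
      = algebraMap K (Unitization K B) α * ((s v : B) : Unitization K B) := by
    linear_combination n1
  have H6 : algebraMap K (Unitization K B) l0 * (((s v : B) : Unitization K B) * ((s v : B) : Unitization K B))
      + algebraMap K (Unitization K B) l1 * (((s v : B) : Unitization K B) * (v : Unitization K B))
      + algebraMap K (Unitization K B) l2 * ((v : Unitization K B) * ((s v : B) : Unitization K B))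
      + algebraMap K (Unitization K B) l3 * ((v : Unitization K B) * (v : Unitization K B))
      = ((s u : B) : Unitization K B) + ((s v : B) : Unitization K B) := by
    linear_combination n2
  have H7 : algebraMap K (Unitization K B) l0 * (((s u : B) : Unitization K B) * ((s v : B) : Unitization K B))
      + algebraMap K (Unitization K B) l1 * (((s u : B) : Unitization K B) * (v : Unitization K B))
      + algebraMap K (Unitization K B) l2 * ((u : Unitization K B) * ((s v : B) : Unitization K B))
      + algebraMap K (Unitization K B) l3 * ((u : Unitization K B) * (v : Unitization K B))
      = 0 := by
    linear_combination n3
  have H8 : algebraMap K (Unitization K B) l0 * (((s u : B) : Unitization K B) * ((s v : B) : Unitization K B))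
      + algebraMap K (Unitization K B) l1 * ((u : Unitization K B) * ((s v : B) : Unitization K B))
      + algebraMap K (Unitization K B) l2 * (((s u : B) : Unitization K B) * (v : Unitization K B))
      + algebraMap K (Unitization K B) l3 * ((u : Unitization K B) * (v : Unitization K B))
      = 0 := by
    linear_combination n4
  have hva := stmt5_main (algebraMap K (Unitization K B)) hf α l0 l1 l2 l3 hα
    (u : Unitization K B) (v : Unitization K B) ((s u : B) : Unitization K B) ((s v : B) : Unitization K B) H1 H2 H3 H4 H5 H6 H7 H8
  have h0 : ((α • v : B) : Unitization K B) = ((0 : B) : Unitization K B) := by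
    rw [Unitization.inr_smul, Unitization.inr_zero, Algebra.smul_def, hva]
  have h1 : α • v = 0 := Unitization.inr_injective h0
  have hv : v = 0 := by
    calc v = α⁻¹ • (α • v) := (inv_smul_smul₀ hα v).symm
      _ = 0 := by rw [h1, smul_zero]
  have hvne : v ≠ 0 := by simpa using hli.ne_zero 1
  exact hvne hv
end

section
/- Let K be a field and α,β ∈ K with α ≠ 0, β ≠ 0, α ≠ β and αβ ≠ 1. For all scalars λ₀,λ₁,λ₂,λ₃ ∈ K, every commutative associative (not necessarily unital) K-algebra B equipped with a K-linear involution *, and all elements u,v ∈ B satisfying p(u,u) = u + αv, p(v,v) = βu + v, p(u,v) = 0 and p(v,u) = 0, the elements u and v are K-linearly dependent. (Equivalently: the evolution algebra A_{5,α,β}, with natural basis e₁,e₂, e₁e₂ = 0, e₁² = e₁ + αe₂, e₂² = βe₁ + e₂, has no faithful associative and commutative representation.) -/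
set_option maxHeartbeats 3200000


/-- The evolution algebra `A_{5,α,β}` (`e₁² = e₁ + αe₂`,
`e₂² = βe₁ + e₂`, `e₁e₂ = 0`, with `α,β ≠ 0`, `α ≠ β`, `αβ ≠ 1`)
has no faithful associative and commutative representation:
for all scalars `λ₀,λ₁,λ₂,λ₃`, every commutative associative (not necessarily unital)
`K`-algebra `B` with a `K`-linear involution `s`, and all `u, v ∈ B` satisfying
`p(u,u) = u + αv`, `p(v,v) = βu + v`, `p(u,v) = 0`, `p(v,u) = 0`
(where `p(u,v) = λ₀uv + λ₁u·v* + λ₂u*·v + λ₃u*·v*`), the elements `u` and `v` are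
`K`-linearly dependent. -/
theorem stmt6 (K : Type*) [Field K] (α β : K) (hα : α ≠ 0) (hβ : β ≠ 0)
    (hne : α ≠ β) (hprod : α * β ≠ 1)
    (l0 l1 l2 l3 : K)
    (B : Type*) [NonUnitalCommRing B] [Module K B]
    [SMulCommClass K B B] [IsScalarTower K B B]
    (s : B →ₗ[K] B)
    (hsmul : ∀ x y : B, s (x * y) = s x * s y)
    (hsinv : ∀ x : B, s (s x) = x)
    (u v : B)
    (huu : l0 • (u * u) + l1 • (u * s u) + l2 • (s u * u) + l3 • (s u * s u) = u + α • v)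
    (hvv : l0 • (v * v) + l1 • (v * s v) + l2 • (s v * v) + l3 • (s v * s v) = β • u + v)
    (huv : l0 • (u * v) + l1 • (u * s v) + l2 • (s u * v) + l3 • (s u * s v) = 0)
    (hvu : l0 • (v * u) + l1 • (v * s u) + l2 • (s v * u) + l3 • (s v * s u) = 0) :
    ¬ LinearIndependent K ![u, v] := by
  classical
  -- star versions of the four hypotheses
  have huuS : l0 • (s u * s u) + l1 • (s u * u) + l2 • (u * s u) + l3 • (u * u)
      = s u + α • s v := by
    have h := congrArg s huu
    simpa [map_add, map_smul, hsmul, hsinv] using h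
  have hvvS : l0 • (s v * s v) + l1 • (s v * v) + l2 • (v * s v) + l3 • (v * v)
      = β • s u + s v := by
    have h := congrArg s hvv
    simpa [map_add, map_smul, hsmul, hsinv] using h
  have huvS : l0 • (s u * s v) + l1 • (s u * v) + l2 • (u * s v) + l3 • (u * v) = 0 := by
    have h := congrArg s huv
    simpa [map_add, map_smul, hsmul, hsinv] using h
  have hvuS : l0 • (s v * s u) + l1 • (s v * u) + l2 • (v * s u) + l3 • (v * u) = 0 := by
    have h := congrArg s hvu
    simpa [map_add, map_smul, hsmul, hsinv] using h
  -- move to the unitization, a commutative ring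
  set M : K →+* Unitization K B := (algebraMap K (Unitization K B)) with hM
  set a : Unitization K B := (u : Unitization K B) with ha
  set b : Unitization K B := (v : Unitization K B) with hb
  set c : Unitization K B := ((s u : B) : Unitization K B) with hc
  set e : Unitization K B := ((s v : B) : Unitization K B) with he
  have tr : ∀ h' : B, ∀ L R : B, L = R →
      ((L : Unitization K B) = (R : Unitization K B)) := by
    intro _ L R hLR; exact congrArg _ hLR
  have H1 : M l0 * (a*a) + M l1 * (a*c) + M l2 * (c*a) + M l3 * (c*c) = a + M α * b := by
    have h := congrArg (fun x : B => (x : Unitization K B)) huu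
    simp only [Unitization.inr_add, Unitization.inr_smul, Unitization.inr_mul,
      Algebra.smul_def] at h
    rw [ha, hb, hc, hM]; exact h
  have H2 : M l0 * (b*b) + M l1 * (b*e) + M l2 * (e*b) + M l3 * (e*e) = M β * a + b := by
    have h := congrArg (fun x : B => (x : Unitization K B)) hvv
    simp only [Unitization.inr_add, Unitization.inr_smul, Unitization.inr_mul,
      Algebra.smul_def] at h
    rw [ha, hb, he, hM]; exact h
  have H3 : M l0 * (a*b) + M l1 * (a*e) + M l2 * (c*b) + M l3 * (c*e) = 0 := by
    have h := congrArg (fun x : B => (x : Unitization K B)) huv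
    simp only [Unitization.inr_add, Unitization.inr_smul, Unitization.inr_mul,
      Unitization.inr_zero, Algebra.smul_def] at h
    rw [ha, hb, hc, he, hM]; exact h
  have H4 : M l0 * (b*a) + M l1 * (b*c) + M l2 * (e*a) + M l3 * (e*c) = 0 := by
    have h := congrArg (fun x : B => (x : Unitization K B)) hvu
    simp only [Unitization.inr_add, Unitization.inr_smul, Unitization.inr_mul,
      Unitization.inr_zero, Algebra.smul_def] at h
    rw [ha, hb, hc, he, hM]; exact h
  have H1s : M l0 * (c*c) + M l1 * (c*a) + M l2 * (a*c) + M l3 * (a*a) = c + M α * e := by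
    have h := congrArg (fun x : B => (x : Unitization K B)) huuS
    simp only [Unitization.inr_add, Unitization.inr_smul, Unitization.inr_mul,
      Algebra.smul_def] at h
    rw [ha, hc, he, hM]; exact h
  have H2s : M l0 * (e*e) + M l1 * (e*b) + M l2 * (b*e) + M l3 * (b*b) = M β * c + e := by
    have h := congrArg (fun x : B => (x : Unitization K B)) hvvS
    simp only [Unitization.inr_add, Unitization.inr_smul, Unitization.inr_mul,
      Algebra.smul_def] at h
    rw [hb, hc, he, hM]; exact h
  have H3s : M l0 * (c*e) + M l1 * (c*b) + M l2 * (a*e) + M l3 * (a*b) = 0 := by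
    have h := congrArg (fun x : B => (x : Unitization K B)) huvS
    simp only [Unitization.inr_add, Unitization.inr_smul, Unitization.inr_mul,
      Unitization.inr_zero, Algebra.smul_def] at h
    rw [ha, hb, hc, he, hM]; exact h
  have H4s : M l0 * (e*c) + M l1 * (e*a) + M l2 * (b*c) + M l3 * (b*a) = 0 := by
    have h := congrArg (fun x : B => (x : Unitization K B)) hvuS
    simp only [Unitization.inr_add, Unitization.inr_smul, Unitization.inr_mul,
      Unitization.inr_zero, Algebra.smul_def] at h
    rw [ha, hb, hc, he, hM]; exact h
  -- cancellation of nonzero scalars in the unitization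
  have hcan : ∀ k : K, k ≠ 0 → ∀ x y : Unitization K B, M k * x = M k * y → x = y := by
    intro k hk x y hxy
    rw [hM, ← Algebra.smul_def, ← Algebra.smul_def] at hxy
    have h2 := congrArg (fun z : Unitization K B => k⁻¹ • z) hxy
    simpa [smul_smul, inv_mul_cancel₀ hk] using h2
  have pull0 : ∀ k : K, k ≠ 0 → ∀ x : Unitization K B, M k * x = 0 → x = 0 := by
    intro k hk x hx
    exact hcan k hk x 0 (by rw [hx, mul_zero])
  -- converting `d = 0` back to B
  have toB : (c*b - a*e : Unitization K B) = 0 → s u * v = u * s v := by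
    intro hX
    apply Unitization.inr_injective (R := K)
    rw [Unitization.inr_mul, Unitization.inr_mul, ← ha, ← hb, ← hc, ← he]
    exact sub_eq_zero.mp hX
  -- contradiction setup
  intro hLI
  obtain ⟨hv0, hsp⟩ := linearIndependent_fin2.mp hLI
  simp only [Matrix.cons_val_one, Matrix.head_cons, Matrix.cons_val_zero] at hv0 hsp
  -- main dependence relation
  have hdep : (β * (1 - α)) • u = (α * (1 - β)) • v := by
    -- it suffices to prove d = 0, i.e. (s u) * v = u * (s v)
    suffices hd0 : s u * v = u * s v by
      -- Lemma A chain
      have hdA : c * b = a * e := by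
        rw [ha, hb, hc, he, ← Unitization.inr_mul, ← Unitization.inr_mul, hd0]
      have hA0 : a*b + M α * (b*b) = 0 := by
        linear_combination (-b) * H1 + a * H3 + (M l1 * a + M l3 * c) * hdA
      have hB0 : M β * (a*a) + a*b = 0 := by
        linear_combination (-a) * H2 + b * H4 + (-(M l1 * b + M l3 * e)) * hdA
      have hC0 : a*e + M α * (b*e) = 0 := by
        linear_combination c * H3 + (-e) * H1 + (-(M l0 * a + M l2 * c)) * hdA
      have hD0 : M β * (a*c) + b*c = 0 := by
        linear_combination (-c) * H2 + e * H4 + (M l0 * b + M l2 * e) * hdA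
      have r1 : a*a*b = M α * M α * (b*b*b) := by
        linear_combination a * hA0 + (-(M α * b)) * hA0
      have r2 : a*c*b = M α * M α * (b*b*e) := by
        linear_combination a * hdA + a * hC0 + (-(M α * e)) * hA0
      have r3 : c*c*b = M α * M α * (b*e*e) := by
        linear_combination c * hdA + c * hC0 + (-(M α * e)) * hdA + (-(M α * e)) * hC0
      have hb2 : M (α*α*(1 - α*β)) * (b*b) = 0 := by
        rw [map_mul, map_mul, map_sub, map_one, map_mul]
        linear_combination b * H1 + (-(M l0)) * r1 + (-(M l1 + M l2)) * r2 + (-(M l3)) * r3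
          + (-(M α * M α * b)) * H2 + (1 - M α * M α * M β) * hA0
      have hb20 : (b*b : Unitization K B) = 0 :=
        pull0 _ (mul_ne_zero (mul_ne_zero hα hα) (sub_ne_zero.mpr (fun hq => hprod hq.symm))) _ hb2
      have hab : (a*b : Unitization K B) = 0 := by
        linear_combination hA0 + (-(M α)) * hb20
      have ha2 : M β * (a*a) = 0 := by
        linear_combination hB0 - hab
      have ha20 : (a*a : Unitization K B) = 0 := pull0 β hβ _ ha2
      -- transport squares through s
      have huu0 : u * u = 0 := by
        apply Unitization.inr_injective (R := K)
        rw [Unitization.inr_mul, Unitization.inr_zero, ← ha]; exact ha20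
      have hvv0 : v * v = 0 := by
        apply Unitization.inr_injective (R := K)
        rw [Unitization.inr_mul, Unitization.inr_zero, ← hb]; exact hb20
      have hcc0 : (c*c : Unitization K B) = 0 := by
        rw [hc, ← Unitization.inr_mul, ← hsmul, huu0, map_zero, Unitization.inr_zero]
      have hee0 : (e*e : Unitization K B) = 0 := by
        rw [he, ← Unitization.inr_mul, ← hsmul, hvv0, map_zero, Unitization.inr_zero]
      have hmu : (M l1 + M l2) * (a*c) = a + M α * b := by
        linear_combination H1 + (-(M l0)) * ha20 + (-(M l3)) * hcc0
      have hmv : (M l1 + M l2) * (b*e) = M β * a + b := by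
        linear_combination H2 + (-(M l0)) * hb20 + (-(M l3)) * hee0
      have hac : M β * (a*c) = M α * (b*e) := by
        linear_combination hD0 - hC0 - hdA
      have hfin : M β * ((1 - M α) * a) = M α * ((1 - M β) * b) := by
        linear_combination (-(M β)) * hmu + (M l1 + M l2) * hac + M α * hmv
      -- back to B
      apply Unitization.inr_injective (R := K)
      rw [Unitization.inr_smul, Unitization.inr_smul, Algebra.smul_def, Algebra.smul_def,
        ← hM, ← ha, ← hb, map_mul, map_mul, map_sub, map_sub, map_one]
      linear_combination hfin
    -- now prove d = 0 by cases
    by_cases h12 : l1 = l2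
    · subst h12
      have KE : (M l0 + M l1) * ((a+c)*(c*b - a*e)) = c*b - a*e := by
        linear_combination c * H3 - e * H1 + b * H1s - a * H3s
      have KF : (M l0 + M l1) * ((b+e)*(c*b - a*e)) = c*b - a*e := by
        linear_combination c * H2 - e * H4 + b * H4s - a * H2s
      by_cases hk0 : l0 + l1 = 0
      · have hz : M l0 + M l1 = 0 := by rw [← map_add, hk0, map_zero]
        rw [hz, zero_mul] at KE
        exact toB KE.symm
      · by_cases hth : l0 = l3
        · -- case 2.1 : θ = 0
          subst hth
          have hew : e * ((a - c) + M α * (b - e)) = 0 := by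
            linear_combination c * H3 - e * H1 + e * H1s - c * H3s
          have hbw : b * ((a - c) + M α * (b - e)) = 0 := by
            linear_combination b * H1s - a * H3s - b * H1 + a * H3
          have hcz : c * (M β * (a - c) + (b - e)) = 0 := by
            linear_combination (-c) * H2 + e * H4 + c * H2s - e * H4s
          have haz : a * (M β * (a - c) + (b - e)) = 0 := by
            linear_combination (-b) * H4s + a * H2s + b * H4 - a * H2
          have hdw : (c*b - a*e) * ((a - c) + M α * (b - e)) = 0 := by
            linear_combination c * hbw - a * hew
          have hdz : (c*b - a*e) * (M β * (a - c) + (b - e)) = 0 := by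
            linear_combination b * hcz - e * haz
          have hdh : M (1 - α*β) * ((c*b - a*e) * (b - e)) = 0 := by
            rw [map_sub, map_one, map_mul]
            linear_combination hdz - M β * hdw
          have hdh0 : ((c*b - a*e) * (b - e) : Unitization K B) = 0 :=
            pull0 _ (sub_ne_zero.mpr (fun hq => hprod hq.symm)) _ hdh
          have hdg0 : ((c*b - a*e) * (a - c) : Unitization K B) = 0 := by
            linear_combination hdw - M α * hdh0
          have hstar : (a + M α*b) * (M β*a + b)
              = (M l0 * M l0 - M l1 * M l1) * ((c*b - a*e)*(c*b - a*e)) := by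
            linear_combination
              (-(M l0*(b*b) + M l1*(b*e) + M l1*(e*b) + M l0*(e*e))) * H1
              + (-(a + M α*b)) * H2
              + (M l0*(b*a) + M l1*(b*c) + M l1*(e*a) + M l0*(e*c)) * H3
          have hAq : (M l1 * a + M l0 * c) * (c*b - a*e) = a*b + M α * (b*b) := by
            linear_combination b * H1 - a * H3
          have hCq : (M l0 * a + M l1 * c) * (c*b - a*e) = -(a*e + M α * (b*e)) := by
            linear_combination c * H3 - e * H1
          have hBq : (M l1 * b + M l0 * e) * (c*b - a*e) = -(M β * (a*a) + a*b) := by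
            linear_combination b * H4 - a * H2
          have hDq : (M l0 * b + M l1 * e) * (c*b - a*e) = M β * (a*c) + b*c := by
            linear_combination c * H2 - e * H4
          have h1a : (M l0 + M l1) * (a * (c*b - a*e)) = b * (a + M α * b) := by
            linear_combination hAq + M l0 * hdg0
          have h2a : (M l0 + M l1) * (a * (c*b - a*e)) = -(e * (a + M α * b)) := by
            linear_combination hCq + M l1 * hdg0
          have h1b : (M l0 + M l1) * (b * (c*b - a*e)) = -(a * (M β * a + b)) := by
            linear_combination hBq + M l0 * hdh0
          have h2b : (M l0 + M l1) * (b * (c*b - a*e)) = c * (M β * a + b) := by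
            linear_combination hDq + M l1 * hdh0
          have hdhp1 : (c*b - a*e) = (b - e) * (a + M α * b) := by
            linear_combination h1a + h2a - KE - (M l0 + M l1) * hdg0
          have hdgp2 : (c*b - a*e) = -((a - c) * (M β * a + b)) := by
            linear_combination h1b + h2b - KF - (M l0 + M l1) * hdh0
          have hdP1 : (c*b - a*e) * (a + M α * b) = 0 := by
            linear_combination (a + M α * b) * hdgp2 + (-(a - c)) * hstar
              + (-((M l0 * M l0 - M l1 * M l1) * (c*b - a*e))) * hdg0
          have hdP2 : (c*b - a*e) * (M β * a + b) = 0 := by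
            linear_combination (M β * a + b) * hdhp1 + (b - e) * hstar
              + ((M l0 * M l0 - M l1 * M l1) * (c*b - a*e)) * hdh0
          have hbd : M (1 - α*β) * (b * (c*b - a*e)) = 0 := by
            rw [map_sub, map_one, map_mul]
            linear_combination hdP2 - M β * hdP1
          have hbd0 : (b * (c*b - a*e) : Unitization K B) = 0 :=
            pull0 _ (sub_ne_zero.mpr (fun hq => hprod hq.symm)) _ hbd
          have had0 : (a * (c*b - a*e) : Unitization K B) = 0 := by
            linear_combination hdP1 - M α * hbd0
          have hdzero : (c*b - a*e : Unitization K B) = 0 := by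
            linear_combination (-1 : Unitization K B) * KE + (2:Unitization K B) * (M l0 + M l1) * had0
              - (M l0 + M l1) * hdg0
          exact toB hdzero
        · -- case 2.2 : θ ≠ 0
          have hθ : l0 - l3 ≠ 0 := sub_ne_zero.mpr hth
          have I1 : (M l0 - M l3) * (a * (c*b - a*e)) = -(e * ((a - c) + M α * (b - e))) := by
            linear_combination c * H3 - e * H1 + e * H1s - c * H3s
          have I2 : (M l0 - M l3) * (c * (c*b - a*e)) = -(b * ((a - c) + M α * (b - e))) := by
            linear_combination b * H1s - a * H3s - b * H1 + a * H3
          have I3 : (M l0 - M l3) * (b * (c*b - a*e)) = c * (M β * (a - c) + (b - e)) := by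
            linear_combination c * H2 - e * H4 - c * H2s + e * H4s
          have I4 : (M l0 - M l3) * (e * (c*b - a*e)) = a * (M β * (a - c) + (b - e)) := by
            linear_combination b * H4s - a * H2s - b * H4 + a * H2
          have hK0a : M (l0 - l3) * (a*c*e*(c*b - a*e)) = M (l0 - l3) * (a*a*b*(c*b - a*e)) := by
            rw [map_sub]
            linear_combination (a*c) * I4 - (a*a) * I3
          have hK0 := hcan _ hθ _ _ hK0a
          have hK1 : a*a*(c*b - a*e) = a*e*(c*b - a*e) := by
            linear_combination (a*e) * KE - (a*a) * KF - (M l0 + M l1) * hK0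
          have hK0b : M (l0 - l3) * (b*e*c*(c*b - a*e)) = M (l0 - l3) * (a*b*b*(c*b - a*e)) := by
            rw [map_sub]
            linear_combination (b*e) * I2 - (b*b) * I1
          have hK0p := hcan _ hθ _ _ hK0b
          have hK2 : b*b*(c*b - a*e) = b*c*(c*b - a*e) := by
            linear_combination (b*c) * KF - (b*b) * KE - (M l0 + M l1) * hK0p
          have hK0c : M (l0 - l3) * (a*b*c*(c*b - a*e)) = M (l0 - l3) * (c*c*e*(c*b - a*e)) := by
            rw [map_sub]
            linear_combination (a*c) * I3 - (c*c) * I4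
          have hK0s := hcan _ hθ _ _ hK0c
          have hK1s : c*c*(c*b - a*e) = b*c*(c*b - a*e) := by
            linear_combination (b*c) * KE - (c*c) * KF - (M l0 + M l1) * hK0s
          have hK0d : M (l0 - l3) * (a*b*e*(c*b - a*e)) = M (l0 - l3) * (c*e*e*(c*b - a*e)) := by
            rw [map_sub]
            linear_combination (a*e) * I3 - (c*e) * I4
          have hK0sp := hcan _ hθ _ _ hK0d
          have hK2s : e*e*(c*b - a*e) = a*e*(c*b - a*e) := by
            linear_combination (a*e) * KF - (e*e) * KE - (M l0 + M l1) * hK0sp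
          have hK3 : (M l0 + M l1) * (a*b*(c*b - a*e)) = (M l0 + M l1) * (a*c*(c*b - a*e)) := by
            linear_combination a * KF - a * KE + (M l0 + M l1) * hK1
          have hK4 : (M l0 + M l1) * (a*b*(c*b - a*e)) = (M l0 + M l1) * (b*e*(c*b - a*e)) := by
            linear_combination b * KE - b * KF + (M l0 + M l1) * hK2
          have hG1 : (M l0 * (a*a) + 2 * (M l1 * (a*c)) + M l3 * (c*c)) * (c*b - a*e)
              = a*(c*b - a*e) + M α * (b*(c*b - a*e)) := by
            linear_combination (c*b - a*e) * H1
          have hG1s : (M l0 * (c*c) + 2 * (M l1 * (a*c)) + M l3 * (a*a)) * (c*b - a*e)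
              = c*(c*b - a*e) + M α * (e*(c*b - a*e)) := by
            linear_combination (c*b - a*e) * H1s
          have hG2 : (M l0 * (b*b) + 2 * (M l1 * (b*e)) + M l3 * (e*e)) * (c*b - a*e)
              = M β * (a*(c*b - a*e)) + b*(c*b - a*e) := by
            linear_combination (c*b - a*e) * H2
          have hG2s : (M l0 * (e*e) + 2 * (M l1 * (b*e)) + M l3 * (b*b)) * (c*b - a*e)
              = M β * (c*(c*b - a*e)) + e*(c*b - a*e) := by
            linear_combination (c*b - a*e) * H2s
          have final22 : M (α - β) * (c*b - a*e) = 0 := by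
            rw [map_sub]
            linear_combination (-(M l0 + M l1)) * hG1 + (-(M l0 + M l1)) * hG1s
              + (M l0 + M l1) * hG2 + (M l0 + M l1) * hG2s
              + ((M l0 + M l1) * (M l0 + M l3)) * hK1 + ((M l0 + M l1) * (M l0 + M l3)) * hK1s
              + (-((M l0 + M l1) * (M l0 + M l3))) * hK2 + (-((M l0 + M l1) * (M l0 + M l3))) * hK2s
              + (-(4 * M l1)) * hK3 + (4 * M l1) * hK4
              + (-(1 - M β)) * KE + (-(M α - 1)) * KF
          exact toB (pull0 _ (sub_ne_zero.mpr hne) _ final22)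
    · -- case 1 : l1 ≠ l2
      have e1 : M (l2 - l1) * (c*b - a*e) = 0 := by
        rw [map_sub]
        linear_combination H3 - H4
      exact toB (pull0 _ (sub_ne_zero.mpr (Ne.symm h12)) _ e1)
  -- finish: the dependence relation contradicts linear independence
  by_cases hc1 : β * (1 - α) = 0
  · have hα1 : α = 1 := by
      rcases mul_eq_zero.mp hc1 with h | h
      · exact absurd h hβ
      · exact (sub_eq_zero.mp h).symm
    have hc2 : α * (1 - β) ≠ 0 := by
      intro h
      rcases mul_eq_zero.mp h with h' | h'
      · exact hα h'
      · exact hne (by rw [hα1, ← sub_eq_zero.mp h'])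
    apply hv0
    rw [hc1, zero_smul] at hdep
    exact (smul_eq_zero.mp hdep.symm).resolve_left hc2
  · apply hsp ((β * (1 - α))⁻¹ * (α * (1 - β)))
    rw [mul_smul, ← hdep, smul_smul, inv_mul_cancel₀ hc1, one_smul]
end

section
/- Let K be a field and α ∈ K with α ≠ 0. There exist scalars λ₀,λ₁,λ₂,λ₃ ∈ K, a commutative associative (not necessarily unital) K-algebra B equipped with a K-linear involution *, and K-linearly independent elements u,v ∈ B satisfying p(u,u) = u, p(v,v) = αu, p(u,v) = 0 and p(v,u) = 0, if and only if the characteristic of K is different from 2. (Equivalently: the evolution algebra A_{8,α}, with natural basis e₁,e₂, e₁e₂ = 0, e₁² = e₁, e₂² = αe₁, has a faithful associative and commutative representation if and only if char K ≠ 2.) -/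
/-- A witness of a faithful associative and commutative representation of the
two-dimensional evolution algebra with natural basis `e₁, e₂` (`e₁e₂ = e₂e₁ = 0`)
and structure constants `eᵢ² = w₁ᵢe₁ + w₂ᵢe₂`: scalars `λ₀,λ₁,λ₂,λ₃ ∈ K`, a commutative
associative (not necessarily unital) `K`-algebra `B` with a `K`-linear involution `s`,
and `K`-linearly independent `u, v ∈ B` (the images of `e₁, e₂`) satisfying the four
relations imposed by `p(a,b) = λ₀ab + λ₁a·b* + λ₂a*·b + λ₃a*·b*`. -/
structure EvoRepWitness (K : Type) [Field K] (w11 w21 w12 w22 : K) : Type 1 where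
  B : Type
  [ringB : NonUnitalCommRing B]
  [modB : Module K B]
  [smulB : SMulCommClass K B B]
  [towerB : IsScalarTower K B B]
  l0 : K
  l1 : K
  l2 : K
  l3 : K
  s : B →ₗ[K] B
  hsmul : ∀ x y : B, s (x * y) = s x * s y
  hsinv : ∀ x : B, s (s x) = x
  u : B
  v : B
  indep : LinearIndependent K ![u, v]
  huu : l0 • (u * u) + l1 • (u * s u) + l2 • (s u * u) + l3 • (s u * s u)
      = w11 • u + w21 • v
  hvv : l0 • (v * v) + l1 • (v * s v) + l2 • (s v * v) + l3 • (s v * s v)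
      = w12 • u + w22 • v
  huv : l0 • (u * v) + l1 • (u * s v) + l2 • (s u * v) + l3 • (s u * s v) = 0
  hvu : l0 • (v * u) + l1 • (v * s u) + l2 • (s v * u) + l3 • (s v * s u) = 0

/-!
When `2` is invertible, `B = K[ω]/(ω² + α)` with its conjugation, `p(x, y) = (x y* + x* y)/2`,
`u = 1` and `v = ω` is a representation.

In characteristic `2` we show `u = 0`; embedding `B` in its unitization makes ring identities
available. Write `ν = λ₀ + λ₃`, `μ = λ₁ + λ₂` and `w = u + u*`, `z = v + v*`. Adding the relations
to their conjugates gives `ν w² = w`, `ν z² = α w`, `μ (u v* + u* v) = 0` and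
`ν (u v + u* v*) + μ (u v* + u* v) = 0`. If `ν = 0`, or if `μ ≠ 0` (then `w z = 0`, so
`α w² = ν w z² = 0`), this forces `w = 0`, i.e. `u* = u`. Then `c u² = u` for
`c = λ₀ + λ₁ + λ₂ + λ₃`, and `p(u, v) = p(u, v)* = 0` give `u v = u v* = 0`, whence
`α u² = u p(v, v) = 0` and `u = c u² = 0`. If `ν ≠ 0` and `μ = 0`, then `p(x, x) = λ₀ x² + λ₃ x*²`,
so `ν² x² = λ₀ p(x, x) + λ₃ p(x, x)*` and `v² = α u²`; squaring `p(u, v) = 0` (squaring is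
additive in characteristic `2`) gives `u⁴ = 0`, hence `u² = p(u, u)² = 0` and `u = 0`.
-/

section TwistedMul

variable {S R : Type*} [CommRing S] [CommRing R] [Algebra S R]

/-- The product `p(x, y)` of the representation, with `σ` in the role of `*`. -/
def twistedMul (σ : R →ₐ[S] R) (l₀ l₁ l₂ l₃ : S) (x y : R) : R :=
  l₀ • (x * y) + l₁ • (x * σ y) + l₂ • (σ x * y) + l₃ • (σ x * σ y)

variable {σ : R →ₐ[S] R} {l₀ l₁ l₂ l₃ : S}

theorem map_twistedMul (hσ : Function.Involutive σ) (x y : R) :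
    σ (twistedMul σ l₀ l₁ l₂ l₃ x y) = twistedMul σ l₀ l₁ l₂ l₃ (σ x) (σ y) := by
  simp only [twistedMul, map_add, map_smul, map_mul, hσ _]

theorem twistedMul_add_map (hσ : Function.Involutive σ) (x y : R) :
    twistedMul σ l₀ l₁ l₂ l₃ x y + σ (twistedMul σ l₀ l₁ l₂ l₃ x y) =
      (l₀ + l₃) • (x * y + σ x * σ y) + (l₁ + l₂) • (x * σ y + σ x * y) := by
  simp only [twistedMul, map_add, map_smul, map_mul, hσ _]
  module

variable [CharP R 2]

theorem twistedMul_add_twistedMul_swap (x y : R) :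
    twistedMul σ l₀ l₁ l₂ l₃ x y + twistedMul σ l₀ l₁ l₂ l₃ y x =
      (l₁ + l₂) • (x * σ y + σ x * y) := by
  simp only [twistedMul, Algebra.smul_def, map_add]
  grind

theorem twistedMul_self_add_map (hσ : Function.Involutive σ) (x : R) :
    twistedMul σ l₀ l₁ l₂ l₃ x x + σ (twistedMul σ l₀ l₁ l₂ l₃ x x) =
      (l₀ + l₃) • (x + σ x) ^ 2 := by
  simp only [twistedMul, map_add, map_smul, map_mul, hσ _]
  simp only [Algebra.smul_def, map_add]
  grind

theorem eq_zero_of_twistedMul_of_map_eq_self (hσ : Function.Involutive σ) {α : S}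
    (hα : IsUnit α) {u v : R} (hσu : σ u = u) (huu : twistedMul σ l₀ l₁ l₂ l₃ u u = u)
    (hvv : twistedMul σ l₀ l₁ l₂ l₃ v v = α • u) (huv : twistedMul σ l₀ l₁ l₂ l₃ u v = 0) :
    u = 0 := by
  have huσv : twistedMul σ l₀ l₁ l₂ l₃ u (σ v) = 0 := by
    rw [← hσu, ← map_twistedMul hσ, huv, map_zero]
  set c := l₀ + l₁ + l₂ + l₃
  simp only [twistedMul, hσu, hσ _] at huu hvv huv huσv
  simp only [Algebra.smul_def] at huu hvv huv huσv
  have hc : algebraMap S R c * (u * u) = u := by grind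
  have hcancel : ∀ y, algebraMap S R c * (u * y) = 0 → u * y = 0 := fun y hy => by grind
  have hsum : u * (v + σ v) = 0 := hcancel _ (by grind)
  have hx : u * v = 0 := hcancel _ (by grind)
  have hy : u * σ v = 0 := by grind
  have huu0 : α • (u * u) = 0 := by rw [Algebra.smul_def]; grind
  grind [hα.smul_eq_zero.mp huu0]

theorem map_eq_self_of_twistedMul (hσ : Function.Involutive σ) {α : S} (hα : IsUnit α)
    (hcase : l₀ + l₃ = 0 ∨ IsUnit (l₁ + l₂)) {u v : R}
    (huu : twistedMul σ l₀ l₁ l₂ l₃ u u = u) (hvv : twistedMul σ l₀ l₁ l₂ l₃ v v = α • u)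
    (huv : twistedMul σ l₀ l₁ l₂ l₃ u v = 0) (hvu : twistedMul σ l₀ l₁ l₂ l₃ v u = 0) :
    σ u = u := by
  set w := u + σ u
  set z := v + σ v
  have hw : (l₀ + l₃) • w ^ 2 = w := by rw [← twistedMul_self_add_map hσ, huu]
  have hz : (l₀ + l₃) • z ^ 2 = α • w := by
    rw [← twistedMul_self_add_map hσ, hvv, map_smul, smul_add]
  suffices w = 0 by grind
  rcases hcase with hν | hμ
  · rw [← hw, hν, zero_smul]
  have hcross : u * σ v + σ u * v = 0 := by
    rw [← hμ.smul_eq_zero, ← twistedMul_add_twistedMul_swap, huv, hvu, add_zero]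
  have hwz : (l₀ + l₃) • (w * z) = 0 := by
    have h := twistedMul_add_map hσ (l₀ := l₀) (l₁ := l₁) (l₂ := l₂) (l₃ := l₃) u v
    rw [huv, map_zero, add_zero, hcross, smul_zero, add_zero] at h
    calc (l₀ + l₃) • (w * z) = (l₀ + l₃) • (u * v + σ u * σ v + (u * σ v + σ u * v)) := by
          congr 1; ring
      _ = 0 := by rw [hcross, add_zero, ← h]
  have hw2 : w ^ 2 = 0 := by
    rw [← hα.smul_eq_zero]
    calc α • w ^ 2 = w * (α • w) := by rw [mul_smul_comm, sq]
      _ = z * ((l₀ + l₃) • (w * z)) := by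
          rw [← hz, mul_smul_comm, mul_smul_comm]; ring_nf
      _ = 0 := by rw [hwz, mul_zero]
  rw [← hw, hw2, smul_zero]

theorem eq_zero_of_twistedMul_of_add_eq_zero (hσ : Function.Involutive σ) {α : S}
    (hα : IsUnit α) (hν : IsUnit (l₀ + l₃)) (hμ : l₁ + l₂ = 0) {u v : R}
    (huu : twistedMul σ l₀ l₁ l₂ l₃ u u = u) (hvv : twistedMul σ l₀ l₁ l₂ l₃ v v = α • u)
    (huv : twistedMul σ l₀ l₁ l₂ l₃ u v = 0) :
    u = 0 := by
  obtain rfl : l₂ = -l₁ := eq_neg_of_add_eq_zero_right hμ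
  have hself : ∀ x, twistedMul σ l₀ l₁ (-l₁) l₃ x x = l₀ • x ^ 2 + l₃ • (σ x) ^ 2 := by
    intro x; simp only [twistedMul, sq, mul_comm (σ x) x]; module
  have hfrob : ∀ x, l₀ • twistedMul σ l₀ l₁ (-l₁) l₃ x x +
      l₃ • σ (twistedMul σ l₀ l₁ (-l₁) l₃ x x) = (l₀ + l₃) ^ 2 • x ^ 2 := by
    intro x
    simp only [hself, map_add, map_smul, map_pow, hσ _]
    simp only [Algebra.smul_def, map_add, map_pow]
    grind
  have hv2 : v ^ 2 = α • u ^ 2 := by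
    rw [← (hν.pow 2).smul_left_cancel, smul_comm _ α, ← hfrob, ← hfrob, hvv, huu, map_smul,
      smul_comm l₀, smul_comm l₃, smul_add]
  have hσv2 : (σ v) ^ 2 = α • (σ u) ^ 2 := by
    rw [← map_pow, hv2, map_smul, map_pow]
  have hP : u * v + σ u * σ v = 0 := by
    have h := twistedMul_add_map hσ (l₀ := l₀) (l₁ := l₁) (l₂ := -l₁) (l₃ := l₃) u v
    rwa [huv, map_zero, add_zero, add_neg_cancel, zero_smul, add_zero, eq_comm,
      hν.smul_eq_zero] at h
  have hE : (l₀ + l₃) • (u * v) + l₁ • (u * σ v + σ u * v) = 0 := by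
    simp only [twistedMul, Algebra.smul_def, map_add, map_neg] at huv ⊢
    grind
  have hu4 : u ^ 4 = 0 := by
    rw [← ((hν.pow 2).mul hα).smul_eq_zero]
    have h := congrArg (· ^ 2) hE
    simp only [Algebra.smul_def, map_mul, map_pow] at h hv2 hσv2 ⊢
    grind
  have hσu4 : σ u ^ 4 = 0 := by rw [← map_pow, hu4, map_zero]
  have hu2 : u ^ 2 = 0 := by
    rw [← huu, hself]
    simp only [Algebra.smul_def]
    grind
  rw [← huu, hself, hu2, ← map_pow, hu2, map_zero, smul_zero, smul_zero, add_zero]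

end TwistedMul

theorem eq_zero_of_twistedMul {K R : Type*} [Field K] [CommRing R] [Algebra K R] [CharP R 2]
    {σ : R →ₐ[K] R} (hσ : Function.Involutive σ) {l₀ l₁ l₂ l₃ α : K} (hα : α ≠ 0) {u v : R}
    (huu : twistedMul σ l₀ l₁ l₂ l₃ u u = u) (hvv : twistedMul σ l₀ l₁ l₂ l₃ v v = α • u)
    (huv : twistedMul σ l₀ l₁ l₂ l₃ u v = 0) (hvu : twistedMul σ l₀ l₁ l₂ l₃ v u = 0) :
    u = 0 := by
  rcases eq_or_ne (l₀ + l₃) 0 with hν | hν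
  · exact eq_zero_of_twistedMul_of_map_eq_self hσ hα.isUnit
      (map_eq_self_of_twistedMul hσ hα.isUnit (.inl hν) huu hvv huv hvu) huu hvv huv
  rcases eq_or_ne (l₁ + l₂) 0 with hμ | hμ
  · exact eq_zero_of_twistedMul_of_add_eq_zero hσ hα.isUnit hν.isUnit hμ huu hvv huv
  · exact eq_zero_of_twistedMul_of_map_eq_self hσ hα.isUnit
      (map_eq_self_of_twistedMul hσ hα.isUnit (.inr hμ.isUnit) huu hvv huv hvu) huu hvv huv

namespace EvoRepWitness

attribute [local instance] ringB modB smulB towerB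

variable {K : Type} [Field K]

section Unitization

variable {w₁₁ w₂₁ w₁₂ w₂₂ : K} (W : EvoRepWitness K w₁₁ w₂₁ w₁₂ w₂₂)

def conjHom : W.B →ₙₐ[K] W.B :=
  { W.s with
    map_zero' := W.s.map_zero
    map_mul' := W.hsmul }

noncomputable def unitizationConj : Unitization K W.B →ₐ[K] Unitization K W.B :=
  Unitization.lift ((Unitization.inrNonUnitalAlgHom K W.B).comp W.conjHom)

@[simp]
theorem unitizationConj_inr (x : W.B) : W.unitizationConj x = (W.s x : Unitization K W.B) := by
  simp [unitizationConj, conjHom]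

theorem unitizationConj_involutive : Function.Involutive W.unitizationConj := by
  intro x
  induction x with
  | inl_add_inr r a =>
    rw [← Unitization.algebraMap_eq_inl, map_add, map_add, AlgHom.commutes, AlgHom.commutes,
      unitizationConj_inr, unitizationConj_inr, W.hsinv]

theorem twistedMul_inr (x y : W.B) :
    twistedMul W.unitizationConj W.l0 W.l1 W.l2 W.l3 (x : Unitization K W.B) y =
      ↑(W.l0 • (x * y) + W.l1 • (x * W.s y) + W.l2 • (W.s x * y) + W.l3 • (W.s x * W.s y)) := by
  simp [twistedMul]

end Unitization

theorem ringChar_ne_two {α : K} (W : EvoRepWitness K 1 0 α 0) (hα : α ≠ 0) : ringChar K ≠ 2 := by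
  intro hK
  have : CharP K 2 := ringChar.eq_iff.mp hK
  have : CharP (Unitization K W.B) 2 :=
    charP_of_injective_algebraMap Unitization.inl_injective 2
  have hu : (W.u : Unitization K W.B) = 0 := by
    refine eq_zero_of_twistedMul W.unitizationConj_involutive hα
      (l₀ := W.l0) (l₁ := W.l1) (l₂ := W.l2) (l₃ := W.l3) (v := W.v) ?_ ?_ ?_ ?_
    · rw [twistedMul_inr, W.huu, one_smul, zero_smul, add_zero]
    · rw [twistedMul_inr, W.hvv, zero_smul, add_zero, Unitization.inr_smul]
    · rw [twistedMul_inr, W.huv, Unitization.inr_zero]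
    · rw [twistedMul_inr, W.hvu, Unitization.inr_zero]
  exact W.indep.ne_zero 0 (Unitization.inr_injective hu)

open QuadraticAlgebra in
noncomputable def ofQuadraticAlgebra (α : K) (h2 : (2 : K) ≠ 0) : EvoRepWitness K 1 0 α 0 where
  B := QuadraticAlgebra K (-α) 0
  l0 := 0
  l1 := 2⁻¹
  l2 := 2⁻¹
  l3 := 0
  s :=
    { toFun := star
      map_add' := star_add
      map_smul' := fun k z => by ext <;> simp }
  hsmul := star_mul'
  hsinv := star_star
  u := 1
  v := ω
  indep := by
    rw [linearIndependent_fin2]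
    refine ⟨fun h => by simpa using congrArg im h, fun k h => ?_⟩
    simpa using congrArg re h
  huu := by ext <;> simp; field_simp; ring
  hvv := by ext <;> simp; field_simp; ring
  huv := by ext <;> simp
  hvu := by ext <;> simp

end EvoRepWitness

/-- The evolution algebra `A_{8,α}` (`e₁² = e₁`, `e₂² = αe₁`,
`e₁e₂ = 0`, `α ≠ 0`) has a faithful associative and commutative representation
if and only if `char K ≠ 2`. -/
theorem stmt8 (K : Type) [Field K] (α : K) (hα : α ≠ 0) :
    Nonempty (EvoRepWitness K 1 0 α 0) ↔ ringChar K ≠ 2 :=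
  ⟨fun ⟨W⟩ => W.ringChar_ne_two hα,
    fun h => ⟨.ofQuadraticAlgebra α (Ring.two_ne_zero h)⟩⟩
end

section
/- Let K be any field (of arbitrary characteristic). There exist scalars λ₀,λ₁,λ₂,λ₃ ∈ K, a commutative associative (not necessarily unital) K-algebra B equipped with a K-linear involution *, and K-linearly independent elements u,v ∈ B satisfying p(u,u) = u − v, p(v,v) = v − u, p(u,v) = 0 and p(v,u) = 0. (Equivalently: the evolution algebra A₅, with natural basis e₁,e₂, e₁e₂ = 0, e₁² = e₁ − e₂, e₂² = −e₁ + e₂, has a faithful associative and commutative representation; one may take p(a,b) = −2ab + 2a*b* if char K ≠ 2 and p(a,b) = ab + a*b* if char K = 2.) -/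
/-- For any field `K`, the evolution algebra `A₅` (`e₁² = e₁ − e₂`,
`e₂² = −e₁ + e₂`, `e₁e₂ = 0`) has a faithful associative and commutative
representation. -/
theorem stmt9 (K : Type) [Field K] :
    Nonempty (EvoRepWitness K 1 (-1) (-1) 1) := by
  refine ⟨{
    B := K × K
    l0 := 1, l1 := 0, l2 := 0, l3 := -1
    s := (LinearEquiv.prodComm K K K).toLinearMap
    hsmul := fun x y => rfl
    hsinv := fun x => rfl
    u := (1, 0)
    v := (0, 1)
    indep := ?_
    huu := by ext <;> simp
    hvv := by ext <;> simp
    huv := by ext <;> simp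
    hvu := by ext <;> simp }⟩
  rw [LinearIndependent.pair_iff]
  intro s t h
  rw [Prod.ext_iff] at h
  simpa using h
end

section
/- Let K be a field and α ∈ K with α ≠ 0, α ≠ 1 and α ≠ −1. In the polynomial ring K[x,y,z,t], the ideal I generg_enerated by the six polynomials x² − x + αz² − αy, αx² + z² − z − αt, αt² + y² − y − αx, t² − t + αy² − αz, xy + αtz, zt + αxy is equal to the ideal generated by x² − x, y² − y, xy, z − y, t − x. Consequently the quotient K[x,y,z,t]/I is isomorphic as a K-algebra to K[x,y]/(x² − x, y² − y, xy), which is 3-dimensional with basis the classes of 1, x, y. -/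
/-
The six relations are permuted by the involution `x ↔ z, y ↔ t` and by `x ↔ y, z ↔ t`. Since `1 - α²` is invertible, the two product relations give `xy = zt = 0`.
Subtracting `α` times the partner relation leaves `(1 - α²) x² - x - α y + α z + α² t = 0`;
multiplying these by the variables and using `xy = zt = 0` gives `x² t = t²`, `t² x = x²`,
`x t² = t x²`, hence `x² = t²`, and likewise `y² = z²`. The remaining linear system in `t - x`
and `z - y` has determinant `(1 - α²)²`, so `t = x`, `z = y`, and then `x² = x`, `y² = y`.

In `K[x,y]/(x² - x, y² - y, xy)` the span of `1, x, y` is stable under multiplication by `x`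
and `y`, so it is everything; evaluating at `(0,0)`, `(1,0)`, `(0,1)` shows independence.
-/

open MvPolynomial

/-- The relations of the universal `p`-algebra `U_p` of `A_{5,α,α}` at a point `(x, y, z, t)`,
with `a` playing the role of `α`. -/
structure A5Relations {R : Type*} [CommRing R] (a x y z t : R) : Prop where
  rel_x : x ^ 2 - x + a * z ^ 2 - a * y = 0
  rel_z : a * x ^ 2 + z ^ 2 - z - a * t = 0
  rel_y : a * t ^ 2 + y ^ 2 - y - a * x = 0
  rel_t : t ^ 2 - t + a * y ^ 2 - a * z = 0
  rel_xy : x * y + a * (t * z) = 0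
  rel_zt : z * t + a * (x * y) = 0

namespace A5Relations

variable {R : Type*} [CommRing R] {a x y z t : R}

theorem star (h : A5Relations a x y z t) : A5Relations a z t x y where
  rel_x := by linear_combination h.rel_z
  rel_z := by linear_combination h.rel_x
  rel_y := by linear_combination h.rel_t
  rel_t := by linear_combination h.rel_y
  rel_xy := by linear_combination h.rel_zt
  rel_zt := by linear_combination h.rel_xy

theorem swap (h : A5Relations a x y z t) : A5Relations a y x t z where
  rel_x := by linear_combination h.rel_y
  rel_z := by linear_combination h.rel_t
  rel_y := by linear_combination h.rel_x
  rel_t := by linear_combination h.rel_z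
  rel_xy := by linear_combination h.rel_xy
  rel_zt := by linear_combination h.rel_zt

theorem of_idempotent (hx : x ^ 2 = x) (hy : y ^ 2 = y) (hxy : x * y = 0) (hz : z = y)
    (ht : t = x) : A5Relations a x y z t := by
  subst hz ht
  exact ⟨by linear_combination hx + a * hy, by linear_combination a * hx + hy,
    by linear_combination a * hx + hy, by linear_combination hx + a * hy,
    by linear_combination (1 + a) * hxy, by linear_combination (1 + a) * hxy⟩

theorem mul_eq_zero_of_isUnit (h : A5Relations a x y z t) (hb : IsUnit (1 - a ^ 2)) : x * y = 0 :=
  hb.mul_right_eq_zero.mp (by linear_combination h.rel_xy - a * h.rel_zt)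

theorem sq_eq_of_mul_eq_zero (h : A5Relations a x y z t) (ha : IsUnit a) (hxy : x * y = 0) :
    y ^ 2 = y * z + a * (t * y) :=
  sub_eq_zero.mp <| ha.mul_right_eq_zero.mp <| by
    linear_combination -y * (h.rel_x - a * h.rel_z) + ((1 - a ^ 2) * x - 1) * hxy

theorem sq_mul_eq_sq (h : A5Relations a x y z t) (ha : IsUnit a) (hb : IsUnit (1 - a ^ 2)) :
    x ^ 2 * t = t ^ 2 := by
  have hzt : z * t = 0 := h.star.mul_eq_zero_of_isUnit hb
  have ht := h.star.sq_eq_of_mul_eq_zero ha hzt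
  exact sub_eq_zero.mp <| hb.mul_right_eq_zero.mp <| by
    linear_combination t * (h.rel_x - a * h.rel_z) - a * hzt - ht

theorem sq_eq_sq (h : A5Relations a x y z t) (ha : IsUnit a) (hb : IsUnit (1 - a ^ 2)) :
    x ^ 2 = t ^ 2 := by
  have h₁ := h.sq_mul_eq_sq ha hb
  have h₂ := h.swap.star.sq_mul_eq_sq ha hb
  have hxy := h.mul_eq_zero_of_isUnit hb
  have ht := h.star.sq_eq_of_mul_eq_zero ha (h.star.mul_eq_zero_of_isUnit hb)
  linear_combination x * ht - h₂ + h₁ + a * t * hxy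

theorem linear_relation (h : A5Relations a x y z t) (ha : IsUnit a) (hb : IsUnit (1 - a ^ 2)) :
    (1 + a ^ 2) * (t - x) + 2 * a * (z - y) = 0 := by
  linear_combination (h.rel_x - a * h.rel_z) - (h.rel_t - a * h.rel_y) -
    (1 - a ^ 2) * h.sq_eq_sq ha hb

theorem idempotent_of_isUnit (h : A5Relations a x y z t) (ha : IsUnit a) (hb : IsUnit (1 - a ^ 2)) :
    x ^ 2 = x ∧ y ^ 2 = y ∧ x * y = 0 ∧ z = y ∧ t = x := by
  have h₁ := h.linear_relation ha hb
  have h₂ := h.swap.linear_relation ha hb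
  have hd : IsUnit ((1 - a ^ 2) ^ 2) := hb.pow 2
  have ht : t = x := sub_eq_zero.mp <| hd.mul_right_eq_zero.mp <| by
    linear_combination (1 + a ^ 2) * h₁ - 2 * a * h₂
  have hz : z = y := sub_eq_zero.mp <| hd.mul_right_eq_zero.mp <| by
    linear_combination (1 + a ^ 2) * h₂ - 2 * a * h₁
  refine ⟨sub_eq_zero.mp <| hb.mul_right_eq_zero.mp ?_,
    sub_eq_zero.mp <| hb.mul_right_eq_zero.mp ?_, h.mul_eq_zero_of_isUnit hb, hz, ht⟩
  · linear_combination h.rel_x - a * h.rel_z - a * hz - a ^ 2 * ht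
  · linear_combination h.rel_y - a * h.rel_t - a * ht - a ^ 2 * hz

end A5Relations

/-- Rewriting with `liftₐ_apply` and then `lift_mk` fails, because the proof argument of `lift`
no longer has the expected type; this states the computation directly. -/
theorem Ideal.Quotient.liftₐ_mk {R A B : Type*} [CommSemiring R] [Ring A] [Algebra R A]
    [Semiring B] [Algebra R B] (I : Ideal A) [I.IsTwoSided] (f : A →ₐ[R] B)
    (hI : ∀ a ∈ I, f a = 0) (a : A) :
    Ideal.Quotient.liftₐ I f hI (Ideal.Quotient.mk I a) = f a :=
  rfl

theorem MvPolynomial.aeval_mem_span {σ R A : Type*} [CommSemiring R] [CommSemiring A]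
    [Algebra R A] (g : σ → A) {s : Set A} (h1 : 1 ∈ Submodule.span R s)
    (hmul : ∀ i, ∀ v ∈ s, v * g i ∈ Submodule.span R s) (p : MvPolynomial σ R) :
    aeval g p ∈ Submodule.span R s := by
  have hmul' (i : σ) :
      Submodule.span R s ≤ (Submodule.span R s).comap (LinearMap.mulRight R (g i)) :=
    Submodule.span_le.mpr (hmul i)
  induction p using MvPolynomial.induction_on with
  | C a => simpa [Algebra.algebraMap_eq_smul_one] using Submodule.smul_mem _ a h1
  | add p q hp hq => simpa using add_mem hp hq
  | mul_X p i hp => simpa using hmul' i hp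

section Ideals

variable (K : Type*) [Field K]

noncomputable def upIdeal (α : K) : Ideal (MvPolynomial (Fin 4) K) :=
  Ideal.span
    {X 0 ^ 2 - X 0 + C α * X 2 ^ 2 - C α * X 1,
     C α * X 0 ^ 2 + X 2 ^ 2 - X 2 - C α * X 3,
     C α * X 3 ^ 2 + X 1 ^ 2 - X 1 - C α * X 0,
     X 3 ^ 2 - X 3 + C α * X 1 ^ 2 - C α * X 2,
     X 0 * X 1 + C α * (X 3 * X 2),
     X 2 * X 3 + C α * (X 0 * X 1)}

noncomputable def orthIdemIdeal₄ : Ideal (MvPolynomial (Fin 4) K) :=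
  Ideal.span {X 0 ^ 2 - X 0, X 1 ^ 2 - X 1, X 0 * X 1, X 2 - X 1, X 3 - X 0}

noncomputable def orthIdemIdeal : Ideal (MvPolynomial (Fin 2) K) :=
  Ideal.span {X 0 ^ 2 - X 0, X 1 ^ 2 - X 1, X 0 * X 1}

variable {K} {S : Type*} [CommRing S]

theorem upIdeal_le_ker_iff (α : K) {F : Type*} [FunLike F (MvPolynomial (Fin 4) K) S]
    [RingHomClass F (MvPolynomial (Fin 4) K) S] (f : F) :
    upIdeal K α ≤ RingHom.ker f ↔
      A5Relations (f (C α)) (f (X 0)) (f (X 1)) (f (X 2)) (f (X 3)) := by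
  simp only [upIdeal, Ideal.span_le, Set.insert_subset_iff, Set.singleton_subset_iff,
    SetLike.mem_coe, RingHom.mem_ker, map_sub, map_add, map_mul, map_pow]
  exact ⟨fun ⟨h₁, h₂, h₃, h₄, h₅, h₆⟩ => ⟨h₁, h₂, h₃, h₄, h₅, h₆⟩,
    fun ⟨h₁, h₂, h₃, h₄, h₅, h₆⟩ => ⟨h₁, h₂, h₃, h₄, h₅, h₆⟩⟩

theorem orthIdemIdeal₄_le_ker_iff {F : Type*} [FunLike F (MvPolynomial (Fin 4) K) S]
    [RingHomClass F (MvPolynomial (Fin 4) K) S] (f : F) :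
    orthIdemIdeal₄ K ≤ RingHom.ker f ↔
      f (X 0) ^ 2 = f (X 0) ∧ f (X 1) ^ 2 = f (X 1) ∧ f (X 0) * f (X 1) = 0 ∧
        f (X 2) = f (X 1) ∧ f (X 3) = f (X 0) := by
  simp only [orthIdemIdeal₄, Ideal.span_le, Set.insert_subset_iff, Set.singleton_subset_iff,
    SetLike.mem_coe, RingHom.mem_ker, map_sub, map_mul, map_pow, sub_eq_zero]

theorem orthIdemIdeal_le_ker_iff {F : Type*} [FunLike F (MvPolynomial (Fin 2) K) S]
    [RingHomClass F (MvPolynomial (Fin 2) K) S] (f : F) :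
    orthIdemIdeal K ≤ RingHom.ker f ↔
      f (X 0) ^ 2 = f (X 0) ∧ f (X 1) ^ 2 = f (X 1) ∧ f (X 0) * f (X 1) = 0 := by
  simp only [orthIdemIdeal, Ideal.span_le, Set.insert_subset_iff, Set.singleton_subset_iff,
    SetLike.mem_coe, RingHom.mem_ker, map_sub, map_mul, map_pow, sub_eq_zero]

theorem upIdeal_eq (α : K) (h0 : α ≠ 0) (h1 : α ≠ 1) (h2 : α ≠ -1) :
    upIdeal K α = orthIdemIdeal₄ K := by
  apply le_antisymm
  · rw [← Ideal.mk_ker (I := orthIdemIdeal₄ K), upIdeal_le_ker_iff]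
    obtain ⟨hx, hy, hxy, hz, ht⟩ :=
      (orthIdemIdeal₄_le_ker_iff (Ideal.Quotient.mk (orthIdemIdeal₄ K))).mp Ideal.mk_ker.ge
    exact .of_idempotent hx hy hxy hz ht
  · rw [← Ideal.mk_ker (I := upIdeal K α), orthIdemIdeal₄_le_ker_iff]
    have hα : (1 : K) - α ^ 2 ≠ 0 := by
      rw [sub_ne_zero, ne_comm, Ne, sq_eq_one_iff]
      exact not_or_intro h1 h2
    refine ((upIdeal_le_ker_iff α _).mp Ideal.mk_ker.ge).idempotent_of_isUnit
      ((h0.isUnit.map C).map _) ?_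
    simpa using (hα.isUnit.map C).map (Ideal.Quotient.mk (upIdeal K α))

end Ideals

section Quotient

variable (K : Type*) [Field K]

local notation "𝔸" => MvPolynomial (Fin 2) K ⧸ orthIdemIdeal K

theorem span_orthIdemIdeal_eq_top :
    Submodule.span K {(1 : 𝔸), Ideal.Quotient.mk _ (X 0), Ideal.Quotient.mk _ (X 1)} = ⊤ := by
  obtain ⟨hx, hy, hxy⟩ :=
    (orthIdemIdeal_le_ker_iff (Ideal.Quotient.mk (orthIdemIdeal K))).mp Ideal.mk_ker.ge
  refine eq_top_iff.mpr fun v _ => ?_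
  obtain ⟨p, rfl⟩ := Ideal.Quotient.mk_surjective v
  rw [show Ideal.Quotient.mk _ p = aeval (fun i => Ideal.Quotient.mk (orthIdemIdeal K) (X i)) p
    from AlgHom.congr_fun (aeval_unique (Ideal.Quotient.mkₐ K _)) p]
  refine aeval_mem_span _ (Submodule.subset_span (Set.mem_insert _ _)) (fun i v hv => ?_) p
  have hyx : Ideal.Quotient.mk (orthIdemIdeal K) (X 1) * Ideal.Quotient.mk _ (X 0) = 0 := by
    rw [mul_comm, hxy]
  fin_cases i <;> rcases hv with rfl | rfl | rfl <;>
    simp [← sq, hx, hy, hxy, hyx, Submodule.mem_span_of_mem]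

theorem linearIndependent_orthIdemIdeal :
    LinearIndependent K ![(1 : 𝔸), Ideal.Quotient.mk _ (X 0), Ideal.Quotient.mk _ (X 1)] := by
  rw [Fintype.linearIndependent_iff]
  intro c hc
  have key (w : Fin 2 → K) (h₀ : w 0 ^ 2 = w 0) (h₁ : w 1 ^ 2 = w 1)
      (h₀₁ : w 0 * w 1 = 0) : c 0 + c 1 * w 0 + c 2 * w 1 = 0 := by
    have hw : orthIdemIdeal K ≤ RingHom.ker (aeval w) :=
      (orthIdemIdeal_le_ker_iff (aeval w)).mpr <| by simpa only [aeval_X] using ⟨h₀, h₁, h₀₁⟩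
    have := congr_arg
      (Ideal.Quotient.liftₐ (orthIdemIdeal K) (aeval w) fun _ hp => RingHom.mem_ker.mp (hw hp)) hc
    simpa only [Fin.sum_univ_three, map_add, map_smul, Matrix.cons_val_zero, Matrix.cons_val_one,
      Matrix.cons_val_two, Matrix.head_cons, Matrix.tail_cons, map_one, Ideal.Quotient.liftₐ_mk,
      aeval_X, smul_eq_mul, mul_one, map_zero] using this
  have e₀ : c 0 = 0 := by simpa using key ![0, 0] (by simp) (by simp) (by simp)
  have e₁ : c 0 + c 1 = 0 := by simpa using key ![1, 0] (by simp) (by simp) (by simp)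
  have e₂ : c 0 + c 2 = 0 := by simpa using key ![0, 1] (by simp) (by simp) (by simp)
  intro i
  fin_cases i
  · exact e₀
  · simpa [e₀] using e₁
  · simpa [e₀] using e₂

theorem finrank_orthIdemIdeal : Module.finrank K 𝔸 = 3 := by
  refine (Module.finrank_eq_card_basis (.mk (linearIndependent_orthIdemIdeal K) ?_)).trans
    (Fintype.card_fin 3)
  rw [Matrix.range_cons, Matrix.range_cons, Matrix.range_cons, Matrix.range_empty,
    Set.union_empty, Set.singleton_union, Set.singleton_union, span_orthIdemIdeal_eq_top]

theorem nonempty_algEquiv_orthIdemIdeal :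
    Nonempty ((MvPolynomial (Fin 4) K ⧸ orthIdemIdeal₄ K) ≃ₐ[K]
      (MvPolynomial (Fin 2) K ⧸ orthIdemIdeal K)) := by
  set f : MvPolynomial (Fin 4) K →ₐ[K] _ :=
    (Ideal.Quotient.mkₐ K (orthIdemIdeal K)).comp (aeval ![X 0, X 1, X 1, X 0])
  set g : MvPolynomial (Fin 2) K →ₐ[K] _ :=
    (Ideal.Quotient.mkₐ K (orthIdemIdeal₄ K)).comp (aeval ![X 0, X 1])
  have hf : orthIdemIdeal₄ K ≤ RingHom.ker f := by
    have := (orthIdemIdeal_le_ker_iff (Ideal.Quotient.mk (orthIdemIdeal K))).mp Ideal.mk_ker.ge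
    rw [orthIdemIdeal₄_le_ker_iff]
    simpa [f] using this
  have hg : orthIdemIdeal K ≤ RingHom.ker g := by
    obtain ⟨hx, hy, hxy, -, -⟩ :=
      (orthIdemIdeal₄_le_ker_iff (Ideal.Quotient.mk (orthIdemIdeal₄ K))).mp Ideal.mk_ker.ge
    rw [orthIdemIdeal_le_ker_iff]
    simpa [g] using ⟨hx, hy, hxy⟩
  obtain ⟨-, -, -, hz, ht⟩ :=
    (orthIdemIdeal₄_le_ker_iff (Ideal.Quotient.mk (orthIdemIdeal₄ K))).mp Ideal.mk_ker.ge
  refine ⟨.ofAlgHom (Ideal.Quotient.liftₐ _ f fun _ hp => RingHom.mem_ker.mp (hf hp))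
    (Ideal.Quotient.liftₐ _ g fun _ hp => RingHom.mem_ker.mp (hg hp)) ?_ ?_⟩ <;>
  · refine Ideal.Quotient.algHom_ext K ?_
    simp only [f, g]
    rw [AlgHom.comp_assoc, Ideal.Quotient.liftₐ_comp, AlgHom.id_comp, ← AlgHom.comp_assoc,
      Ideal.Quotient.liftₐ_comp]
    refine MvPolynomial.algHom_ext fun i => ?_
    fin_cases i <;> simp [hz, ht]

end Quotient

/-- With `x = X 0`, `y = X 1`, `z = X 2`, `t = X 3` in `K[x,y,z,t]`
and `α ≠ 0, 1, −1`, the ideal `I` generated by the six polynomials defining the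
universal `p`-algebra of `A_{5,α,α}` equals the ideal generated by
`x² − x`, `y² − y`, `xy`, `z − y`, `t − x`.  Consequently `K[x,y,z,t]/I` is isomorphic
as a `K`-algebra to `K[x,y]/(x² − x, y² − y, xy)`, which is 3-dimensional with basis
the classes of `1, x, y`. -/
theorem stmt10 (K : Type*) [Field K] (α : K) (h0 : α ≠ 0) (h1 : α ≠ 1) (h2 : α ≠ -1)
    (I J : Ideal (MvPolynomial (Fin 4) K))
    (hI : I = Ideal.span
      {X 0 ^ 2 - X 0 + C α * X 2 ^ 2 - C α * X 1,
       C α * X 0 ^ 2 + X 2 ^ 2 - X 2 - C α * X 3,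
       C α * X 3 ^ 2 + X 1 ^ 2 - X 1 - C α * X 0,
       X 3 ^ 2 - X 3 + C α * X 1 ^ 2 - C α * X 2,
       X 0 * X 1 + C α * (X 3 * X 2),
       X 2 * X 3 + C α * (X 0 * X 1)})
    (hJ : J = Ideal.span
      {X 0 ^ 2 - X 0, X 1 ^ 2 - X 1, X 0 * X 1, X 2 - X 1, X 3 - X 0})
    (J2 : Ideal (MvPolynomial (Fin 2) K))
    (hJ2 : J2 = Ideal.span {X 0 ^ 2 - X 0, X 1 ^ 2 - X 1, X 0 * X 1}) :
    I = J ∧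
    Nonempty ((MvPolynomial (Fin 4) K ⧸ I) ≃ₐ[K] (MvPolynomial (Fin 2) K ⧸ J2)) ∧
    Module.finrank K (MvPolynomial (Fin 2) K ⧸ J2) = 3 ∧
    LinearIndependent K ![(1 : MvPolynomial (Fin 2) K ⧸ J2),
      Ideal.Quotient.mk J2 (X 0), Ideal.Quotient.mk J2 (X 1)] ∧
    Submodule.span K {(1 : MvPolynomial (Fin 2) K ⧸ J2),
      Ideal.Quotient.mk J2 (X 0), Ideal.Quotient.mk J2 (X 1)} = ⊤ := by
  obtain rfl : J = orthIdemIdeal₄ K := hJ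
  obtain rfl : J2 = orthIdemIdeal K := hJ2
  obtain rfl : I = orthIdemIdeal₄ K := hI.trans (upIdeal_eq α h0 h1 h2)
  exact ⟨rfl, nonempty_algEquiv_orthIdemIdeal K, finrank_orthIdemIdeal K,
    linearIndependent_orthIdemIdeal K, span_orthIdemIdeal_eq_top K⟩
end

section
/- Let K be a field. The (not necessarily unital) K-subalgebra of the quotient algebra K[x,y]/(x⁴ − x, y⁴ − y, xy) generated by the residue classes of x and y (equivalently, the K-linear span of the classes of x, x², x³, y, y², y³) is isomorphic as a K-algebra to K[a,b]/(ab, a³ + b³ − 1). In particular this subalgebra is 6-dimensional and unital, with unit the class of x³ + y³. -/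
/-!
In `R = K[x,y]/(x⁴ − x, y⁴ − y, xy)` the element `u = x³ + y³` is idempotent with `u x = x` and
`u y = y`, so `u` is a unit for the non-unital subalgebra `T` generated by `x` and `y`; as `u ∈ T`
and `x, y` generate `R`, also `T = u R`. The projection `R → K[a,b]/(ab, a³ + b³ − 1)` sends `u`
to `1`, and its kernel, generated by `xy = 0` and `u − 1`, is killed by `u`; hence it restricts
to a bijection on `T = u R`. Finally `T` is spanned by `x, x², x³, y, y², y³`, which are
independent because they map to `(tⁱ, 0), (0, tⁱ)` in `A × A` for `A = K[t]/(t⁴ − t)`.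
-/

open MvPolynomial

theorem pow_succ_mem {S M : Type*} [Monoid M] [SetLike S M] [MulMemClass S M] {s : S} {a : M}
    (ha : a ∈ s) (n : ℕ) : a ^ (n + 1) ∈ s := by
  induction n with
  | zero => rwa [pow_one]
  | succ n ih => rw [pow_succ]; exact mul_mem ih ha

section Adjoin

variable {K R : Type*} [CommSemiring K]

theorem NonUnitalAlgebra.mul_eq_self_of_mem_adjoin [Semiring R] [Algebra K R] {e : R}
    {s : Set R} (hs : ∀ a ∈ s, e * a = a) {w : R} (hw : w ∈ NonUnitalAlgebra.adjoin K s) :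
    e * w = w := by
  induction hw using NonUnitalAlgebra.adjoin_induction with
  | mem a ha => exact hs a ha
  | add a b _ _ ha hb => rw [mul_add, ha, hb]
  | zero => rw [mul_zero]
  | mul a b _ _ ha _ => rw [← mul_assoc, ha]
  | smul c a _ ha => rw [mul_smul_comm, ha]

theorem IsIdempotentElem.mul_mem_nonUnitalAdjoin [CommSemiring R] [Algebra K R] {e : R}
    {s : Set R} (he : IsIdempotentElem e) (hes : e ∈ NonUnitalAlgebra.adjoin K s) {r : R}
    (hr : r ∈ Algebra.adjoin K s) : e * r ∈ NonUnitalAlgebra.adjoin K s := by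
  induction hr using Algebra.adjoin_induction with
  | mem a ha => exact mul_mem hes (NonUnitalAlgebra.subset_adjoin K ha)
  | algebraMap c =>
    rw [← Algebra.commutes, ← Algebra.smul_def]
    exact SMulMemClass.smul_mem c hes
  | add a b _ _ ha hb => rw [mul_add]; exact add_mem ha hb
  | mul a b _ _ ha hb =>
    rw [show e * (a * b) = (e * a) * (e * b) by rw [mul_mul_mul_comm, he.eq]]
    exact mul_mem ha hb

end Adjoin

theorem bijective_restrict_of_mul_eq_self {K R S : Type*} [CommRing K] [Ring R] [Ring S]
    [Algebra K R] [Algebra K S] (f : R →ₐ[K] S) (hf : Function.Surjective f)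
    (T : NonUnitalSubalgebra K R) {u : R} (hfu : f u = 1) (hker : ∀ r, f r = 0 → u * r = 0)
    (hunit : ∀ w ∈ T, u * w = w) (hmem : ∀ r, u * r ∈ T) :
    Function.Bijective fun w : T => f w := by
  refine ⟨fun v w hvw => Subtype.ext ?_, fun s => ?_⟩
  · have h : f (v - w) = 0 := by simpa [sub_eq_zero] using hvw
    rw [← sub_eq_zero, ← hunit _ (sub_mem v.2 w.2), hker _ h]
  · obtain ⟨r, rfl⟩ := hf s
    exact ⟨⟨u * r, hmem r⟩, by simp [hfu]⟩

section Relations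

variable {K R : Type*} [CommSemiring K] [CommRing R] [Algebra K R] {x y : R}

def powFamily (x y : R) : Fin 3 ⊕ Fin 3 → R :=
  Sum.elim (fun i => x ^ ((i : ℕ) + 1)) (fun i => y ^ ((i : ℕ) + 1))

theorem pow_succ_eq_pow_mod_three_succ (hx : x ^ 4 = x) (n : ℕ) :
    x ^ (n + 1) = x ^ (n % 3 + 1) := by
  induction n using Nat.strong_induction_on with
  | _ n ih =>
    by_cases h : n < 3
    · rw [Nat.mod_eq_of_lt h]
    · obtain ⟨m, rfl⟩ := Nat.exists_eq_add_of_le' (not_lt.mp h)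
      rw [Nat.add_mod_right, ← ih m (by omega), show m + 3 + 1 = m + 4 by ring, pow_add, hx,
        pow_succ]

theorem pow_succ_mem_span_powFamily (hx : x ^ 4 = x) (hy : y ^ 4 = y) (n : ℕ) :
    x ^ (n + 1) ∈ Submodule.span K (Set.range (powFamily x y)) ∧
      y ^ (n + 1) ∈ Submodule.span K (Set.range (powFamily x y)) := by
  rw [pow_succ_eq_pow_mod_three_succ hx, pow_succ_eq_pow_mod_three_succ hy]
  have hn : n % 3 < 3 := Nat.mod_lt n three_pos
  exact ⟨Submodule.subset_span ⟨.inl ⟨n % 3, hn⟩, rfl⟩,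
    Submodule.subset_span ⟨.inr ⟨n % 3, hn⟩, rfl⟩⟩

theorem mul_mem_span_powFamily (hx : x ^ 4 = x) (hy : y ^ 4 = y) (hxy : x * y = 0) {v w : R}
    (hv : v ∈ Submodule.span K (Set.range (powFamily x y)))
    (hw : w ∈ Submodule.span K (Set.range (powFamily x y))) :
    v * w ∈ Submodule.span K (Set.range (powFamily x y)) := by
  have hvw := Submodule.mul_mem_mul hv hw
  rw [Submodule.span_mul_span] at hvw
  refine Submodule.span_le.mpr ?_ hvw
  rw [Set.mul_subset_iff]
  rintro _ ⟨i | i, rfl⟩ _ ⟨j | j, rfl⟩ <;> simp only [powFamily, Sum.elim_inl, Sum.elim_inr]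
  · rw [← pow_add, show (i : ℕ) + 1 + (j + 1) = i + j + 1 + 1 by ring]
    exact (pow_succ_mem_span_powFamily hx hy _).1
  · rw [show x ^ ((i : ℕ) + 1) * y ^ ((j : ℕ) + 1) = x ^ (i : ℕ) * y ^ (j : ℕ) * (x * y) by
      ring, hxy, mul_zero]
    exact zero_mem _
  · rw [show y ^ ((i : ℕ) + 1) * x ^ ((j : ℕ) + 1) = x ^ (j : ℕ) * y ^ (i : ℕ) * (x * y) by
      ring, hxy, mul_zero]
    exact zero_mem _
  · rw [← pow_add, show (i : ℕ) + 1 + (j + 1) = i + j + 1 + 1 by ring]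
    exact (pow_succ_mem_span_powFamily hx hy _).2

theorem toSubmodule_nonUnitalAdjoin_eq_span_powFamily (hx : x ^ 4 = x) (hy : y ^ 4 = y)
    (hxy : x * y = 0) :
    (NonUnitalAlgebra.adjoin K {x, y}).toSubmodule =
      Submodule.span K (Set.range (powFamily x y)) := by
  apply le_antisymm
  · refine NonUnitalAlgebra.adjoin_le (S := (Submodule.span K _).toNonUnitalSubalgebra
      fun _ _ => mul_mem_span_powFamily hx hy hxy) ?_
    rintro _ (rfl | rfl)
    · simpa using (pow_succ_mem_span_powFamily (K := K) hx hy 0).1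
    · simpa using (pow_succ_mem_span_powFamily (K := K) hx hy 0).2
  · rw [Submodule.span_le]
    rintro _ ⟨i | i, rfl⟩
    · exact pow_succ_mem (NonUnitalAlgebra.subset_adjoin K (by simp)) _
    · exact pow_succ_mem (NonUnitalAlgebra.subset_adjoin K (by simp)) _

theorem isIdempotentElem_cube_add_cube (hx : x ^ 4 = x) (hy : y ^ 4 = y) (hxy : x * y = 0) :
    IsIdempotentElem (x ^ 3 + y ^ 3) := by
  unfold IsIdempotentElem
  linear_combination x ^ 2 * hx + y ^ 2 * hy + 2 * x ^ 2 * y ^ 2 * hxy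

variable (K) in
theorem cube_add_cube_mem_nonUnitalAdjoin (x y : R) :
    x ^ 3 + y ^ 3 ∈ NonUnitalAlgebra.adjoin K {x, y} :=
  add_mem (pow_succ_mem (NonUnitalAlgebra.subset_adjoin K (by simp)) 2)
    (pow_succ_mem (NonUnitalAlgebra.subset_adjoin K (by simp)) 2)

theorem cube_add_cube_mul_eq_self_of_mem_nonUnitalAdjoin (hx : x ^ 4 = x) (hy : y ^ 4 = y)
    (hxy : x * y = 0) {w : R} (hw : w ∈ NonUnitalAlgebra.adjoin K {x, y}) :
    (x ^ 3 + y ^ 3) * w = w := by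
  refine NonUnitalAlgebra.mul_eq_self_of_mem_adjoin ?_ hw
  rintro _ (rfl | rfl)
  · linear_combination hx + y ^ 2 * hxy
  · linear_combination hy + x ^ 2 * hxy

end Relations

section Quotients

variable {K : Type*} [Field K]

-- `U_p = K[x,y] ⧸ idealU K` and `H_{2,1} = K[a,b] ⧸ idealH K`, with `x, y` resp. `a, b` the
-- classes of `X 0, X 1`.
variable (K) in
noncomputable def idealU : Ideal (MvPolynomial (Fin 2) K) :=
  Ideal.span {X 0 ^ 4 - X 0, X 1 ^ 4 - X 1, X 0 * X 1}

variable (K) in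
noncomputable def idealH : Ideal (MvPolynomial (Fin 2) K) :=
  Ideal.span {X 0 * X 1, X 0 ^ 3 + X 1 ^ 3 - 1}

theorem mk_idealU_X_pow_four (i : Fin 2) :
    Ideal.Quotient.mk (idealU K) (X i) ^ 4 = Ideal.Quotient.mk (idealU K) (X i) := by
  rw [← map_pow, Ideal.Quotient.mk_eq_mk_iff_sub_mem]
  apply Ideal.subset_span
  fin_cases i <;> simp

theorem mk_idealU_X_zero_mul_X_one :
    Ideal.Quotient.mk (idealU K) (X 0) * Ideal.Quotient.mk (idealU K) (X 1) = 0 := by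
  rw [← map_mul, Ideal.Quotient.eq_zero_iff_mem]
  exact Ideal.subset_span (by simp)

theorem idealU_le_idealH : idealU K ≤ idealH K := by
  have hxy : (X 0 * X 1 : MvPolynomial (Fin 2) K) ∈ idealH K := Ideal.subset_span (by simp)
  have hu : (X 0 ^ 3 + X 1 ^ 3 - 1 : MvPolynomial (Fin 2) K) ∈ idealH K :=
    Ideal.subset_span (by simp)
  rw [idealU, Ideal.span_le]
  rintro _ (rfl | rfl | rfl)
  · rw [SetLike.mem_coe]
    convert add_mem (Ideal.mul_mem_left _ (X 0) hu) (Ideal.mul_mem_left _ (-X 1 ^ 2) hxy) using 1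
    ring
  · rw [SetLike.mem_coe]
    convert add_mem (Ideal.mul_mem_left _ (X 1) hu) (Ideal.mul_mem_left _ (-X 0 ^ 2) hxy) using 1
    ring
  · exact hxy

theorem factorₐ_cube_add_cube :
    Ideal.Quotient.factorₐ K idealU_le_idealH
      (Ideal.Quotient.mk (idealU K) (X 0) ^ 3 + Ideal.Quotient.mk (idealU K) (X 1) ^ 3) = 1 := by
  rw [← map_pow, ← map_pow, ← map_add, Ideal.Quotient.factorₐ_apply_mk,
    ← map_one (Ideal.Quotient.mk _), Ideal.Quotient.mk_eq_mk_iff_sub_mem]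
  exact Ideal.subset_span (by simp)

theorem cube_add_cube_mul_eq_zero_of_factorₐ_eq_zero {r : MvPolynomial (Fin 2) K ⧸ idealU K}
    (hr : Ideal.Quotient.factorₐ K idealU_le_idealH r = 0) :
    (Ideal.Quotient.mk (idealU K) (X 0) ^ 3 + Ideal.Quotient.mk (idealU K) (X 1) ^ 3) * r = 0 := by
  rw [Ideal.Quotient.factorₐ_apply, ← RingHom.mem_ker, Ideal.Quotient.factor_ker, idealH,
    Ideal.map_span, Set.image_pair, Ideal.mem_span_pair] at hr
  obtain ⟨c, d, rfl⟩ := hr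
  have hu := isIdempotentElem_cube_add_cube (mk_idealU_X_pow_four (K := K) 0)
    (mk_idealU_X_pow_four 1) mk_idealU_X_zero_mul_X_one
  simp only [map_mul, map_sub, map_add, map_pow, map_one, mk_idealU_X_zero_mul_X_one]
  linear_combination d * hu.eq

theorem algebra_adjoin_mk_X_eq_top (I : Ideal (MvPolynomial (Fin 2) K)) :
    Algebra.adjoin K {Ideal.Quotient.mk I (X 0), Ideal.Quotient.mk I (X 1)} = ⊤ := by
  have h : {Ideal.Quotient.mk I (X 0), Ideal.Quotient.mk I (X 1)} =
      Ideal.Quotient.mkₐ K I '' Set.range X := by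
    rw [← Set.range_comp]; ext; simp [Fin.exists_fin_two, eq_comm]
  rw [h, Algebra.adjoin_image, adjoin_range_X, Algebra.map_top, AlgHom.range_eq_top]
  exact Ideal.Quotient.mkₐ_surjective K I

theorem linearIndependent_root_pow_succ :
    LinearIndependent K fun i : Fin 3 =>
      AdjoinRoot.root (Polynomial.X ^ 4 - Polynomial.X : Polynomial K) ^ ((i : ℕ) + 1) := by
  have hmonic : (Polynomial.X ^ 4 - Polynomial.X : Polynomial K).Monic :=
    Polynomial.monic_X_pow_sub (by rw [Polynomial.degree_X]; norm_num)
  have hdeg : (Polynomial.X ^ 4 - Polynomial.X : Polynomial K).natDegree = 4 := by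
    compute_degree!
  let pb := AdjoinRoot.powerBasis' hmonic
  change LinearIndependent K fun i : Fin 3 => pb.gen ^ ((i : ℕ) + 1)
  have h : (fun i : Fin 3 => pb.gen ^ ((i : ℕ) + 1)) =
      pb.basis ∘ fun i => Fin.cast hdeg.symm i.succ := by
    ext i; simp [pb]; rfl
  rw [h]
  exact pb.basis.linearIndependent.comp _ ((Fin.cast_injective _).comp (Fin.succ_injective _))

theorem linearIndependent_powFamily_mk_X :
    LinearIndependent K
      (powFamily (Ideal.Quotient.mk (idealU K) (X 0)) (Ideal.Quotient.mk (idealU K) (X 1))) := by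
  set f : Polynomial K := Polynomial.X ^ 4 - Polynomial.X
  set t := AdjoinRoot.root f
  have ht : t ^ 4 = t := by
    have h : AdjoinRoot.mk f (Polynomial.X ^ 4 - Polynomial.X) = 0 := AdjoinRoot.mk_self
    rwa [map_sub, map_pow, AdjoinRoot.mk_X, sub_eq_zero] at h
  let φ : MvPolynomial (Fin 2) K →ₐ[K] AdjoinRoot f × AdjoinRoot f := aeval ![(t, 0), (0, t)]
  have hφ : idealU K ≤ RingHom.ker φ := by
    rw [idealU, Ideal.span_le]
    rintro _ (rfl | rfl | rfl) <;> simp [φ, Prod.ext_iff, ht]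
  let θ := Ideal.Quotient.liftₐ (idealU K) φ fun a ha => hφ ha
  have hθ : θ.toLinearMap ∘ powFamily (Ideal.Quotient.mk (idealU K) (X 0))
      (Ideal.Quotient.mk (idealU K) (X 1)) =
      Sum.elim (LinearMap.inl K _ _ ∘ fun i : Fin 3 => t ^ ((i : ℕ) + 1))
        (LinearMap.inr K _ _ ∘ fun i : Fin 3 => t ^ ((i : ℕ) + 1)) := by
    have hx : θ (Ideal.Quotient.mk (idealU K) (X 0)) = (t, 0) := by
      change φ (X 0) = _
      simp [φ]
    have hy : θ (Ideal.Quotient.mk (idealU K) (X 1)) = (0, t) := by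
      change φ (X 1) = _
      simp [φ]
    ext (i | i) <;> simp [powFamily, hx, hy]
  exact LinearIndependent.of_comp θ.toLinearMap
    (hθ ▸ linearIndependent_inl_union_inr' linearIndependent_root_pow_succ
      linearIndependent_root_pow_succ)

end Quotients

/-- The (not necessarily unital) `K`-subalgebra `T` of
`K[x,y]/(x⁴ − x, y⁴ − y, xy)` generated by the residue classes of `x` and `y`
is isomorphic as a `K`-algebra to `K[a,b]/(ab, a³ + b³ − 1)`.  In particular `T` is
6-dimensional and unital, with unit the class of `x³ + y³`. -/
theorem stmt11 (K : Type*) [Field K]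
    (Q : Ideal (MvPolynomial (Fin 2) K))
    (hQ : Q = Ideal.span {X 0 ^ 4 - X 0, X 1 ^ 4 - X 1, X 0 * X 1})
    (H : Ideal (MvPolynomial (Fin 2) K))
    (hH : H = Ideal.span {X 0 * X 1, X 0 ^ 3 + X 1 ^ 3 - 1})
    (T : NonUnitalSubalgebra K (MvPolynomial (Fin 2) K ⧸ Q))
    (hT : T = NonUnitalAlgebra.adjoin K
      {Ideal.Quotient.mk Q (X 0), Ideal.Quotient.mk Q (X 1)}) :
    (∃ e : T ≃ₗ[K] (MvPolynomial (Fin 2) K ⧸ H),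
      ∀ a b : T, e (a * b) = e a * e b) ∧
    Module.finrank K T = 6 ∧
    Ideal.Quotient.mk Q (X 0 ^ 3 + X 1 ^ 3) ∈ T ∧
    (∀ w : MvPolynomial (Fin 2) K ⧸ Q, w ∈ T →
      Ideal.Quotient.mk Q (X 0 ^ 3 + X 1 ^ 3) * w = w ∧
      w * Ideal.Quotient.mk Q (X 0 ^ 3 + X 1 ^ 3) = w) := by
  obtain rfl : Q = idealU K := hQ
  obtain rfl : H = idealH K := hH
  subst hT
  set x := Ideal.Quotient.mk (idealU K) (X 0)
  set y := Ideal.Quotient.mk (idealU K) (X 1)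
  have hx : x ^ 4 = x := mk_idealU_X_pow_four 0
  have hy : y ^ 4 = y := mk_idealU_X_pow_four 1
  have hxy : x * y = 0 := mk_idealU_X_zero_mul_X_one
  have hunit : ∀ w ∈ NonUnitalAlgebra.adjoin K {x, y}, (x ^ 3 + y ^ 3) * w = w :=
    fun _ => cube_add_cube_mul_eq_self_of_mem_nonUnitalAdjoin hx hy hxy
  have hideal : ∀ r, (x ^ 3 + y ^ 3) * r ∈ NonUnitalAlgebra.adjoin K {x, y} := fun r =>
    (isIdempotentElem_cube_add_cube hx hy hxy).mul_mem_nonUnitalAdjoin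
      (cube_add_cube_mem_nonUnitalAdjoin K x y) (by rw [algebra_adjoin_mk_X_eq_top]; trivial)
  set f := Ideal.Quotient.factorₐ K (idealU_le_idealH (K := K))
  have hbij := bijective_restrict_of_mul_eq_self f
    (Ideal.Quotient.factor_surjective idealU_le_idealH) _ factorₐ_cube_add_cube
    (fun _ => cube_add_cube_mul_eq_zero_of_factorₐ_eq_zero) hunit hideal
  rw [map_add, map_pow, map_pow]
  refine ⟨⟨LinearEquiv.ofBijective
    (f.toLinearMap ∘ₗ (NonUnitalAlgebra.adjoin K {x, y}).toSubmodule.subtype) hbij,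
    fun a b => map_mul f a.1 b.1⟩, ?_, cube_add_cube_mem_nonUnitalAdjoin K x y,
    fun w hw => ⟨hunit w hw, (mul_comm _ _).trans (hunit w hw)⟩⟩
  change Module.finrank K (NonUnitalAlgebra.adjoin K {x, y}).toSubmodule = 6
  rw [toSubmodule_nonUnitalAdjoin_eq_span_powFamily hx hy hxy,
    finrank_span_eq_card linearIndependent_powFamily_mk_X]
  rfl
end

section
/- Let K be a field. The K-algebra K[a,b]/(ab, a³ + b³ − 1) is isomorphic as a K-algebra to the direct product (K[t]/(t³ − 1)) × (K[t]/(t³ − 1)), i.e. to the direct product of two copies of the group algebra over K of the cyclic group of order 3. Moreover, the classes of a, a², a³, b, b², b³ form a K-basis of K[a,b]/(ab, a³ + b³ − 1), so this algebra is 6-dimensional, and the classes of a³ and b³ are orthogonal idempotents whose sum is 1. -/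
/-!
Write `x, y` for the classes of `a, b`. From `xy = 0` and `x³ + y³ = 1` one gets `x⁴ = x`
and `y⁴ = y`, so the span of `x, x², x³, y, y², y³` contains `1 = x³ + y³` and is stable under
multiplication by the generators `x` and `y`: it is the whole algebra. The algebra map to
`R × R`, `R = K[t]/(t³ - 1)`, given by `a ↦ (t, 0)`, `b ↦ (0, t)` sends these six elements onto
the basis `(tⁱ, 0), (0, tⁱ)`, `i = 1, 2, 3`, of `R × R`, and a linear map sending a spanning
family onto a basis is bijective. Finally `x³ x³ = x³ (1 - y³) = x³` and `x³ y³ = (xy)³ = 0`.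
-/

open Polynomial Module

theorem Algebra.toSubmodule_adjoin_le_of_mul_mem {R A : Type*} [CommSemiring R] [Semiring A]
    [Algebra R A] (S : Submodule R A) {t : Set A} (h1 : (1 : A) ∈ S)
    (hmul : ∀ a ∈ S, ∀ g ∈ t, a * g ∈ S) :
    Subalgebra.toSubmodule (Algebra.adjoin R t) ≤ S := by
  intro z hz
  suffices ∀ a ∈ S, a * z ∈ S by simpa using this 1 h1
  induction hz using Algebra.adjoin_induction with
  | mem g hg => exact fun a ha => hmul a ha g hg
  | algebraMap r =>
    exact fun a ha => by rw [← Algebra.commutes, ← Algebra.smul_def]; exact S.smul_mem r ha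
  | add u v _ _ hu hv => exact fun a ha => by rw [mul_add]; exact add_mem (hu a ha) (hv a ha)
  | mul u v _ _ hu hv => exact fun a ha => by rw [← mul_assoc]; exact hv _ (hu a ha)

theorem LinearMap.bijective_of_comp_eq_basis {ι R M N : Type*} [Ring R] [AddCommGroup M]
    [Module R M] [AddCommGroup N] [Module R N] (f : M →ₗ[R] N) {w : ι → M}
    (hw : ⊤ ≤ Submodule.span R (Set.range w)) (b : Basis ι R N) (hfw : f ∘ w = b) :
    Function.Bijective f := by
  let B := Basis.mk (LinearIndependent.of_comp f (hfw ▸ b.linearIndependent)) hw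
  have hf : f = (B.equiv b (Equiv.refl ι)).toLinearMap := B.ext fun i => by
    rw [LinearEquiv.coe_coe, Basis.equiv_apply, Equiv.refl_apply, Basis.mk_apply, ← hfw]
    rfl
  rw [hf]
  exact LinearEquiv.bijective _

theorem MvPolynomial.adjoin_range_mk_X {R σ : Type*} [CommRing R]
    (I : Ideal (MvPolynomial σ R)) :
    Algebra.adjoin R (Set.range fun i => Ideal.Quotient.mk I (X i)) = ⊤ := by
  have hmk : aeval (fun i => Ideal.Quotient.mk I (X i)) = Ideal.Quotient.mkₐ R I :=
    MvPolynomial.algHom_ext fun i => by simp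
  rw [← MvPolynomial.aeval_range, AlgHom.range_eq_top, hmk]
  exact Ideal.Quotient.mkₐ_surjective R I

section OrthogonalPowers

variable {A : Type*} [CommRing A] {x y : A} {n : ℕ}

theorem pow_succ_eq_self_of_mul_eq_zero (hxy : x * y = 0) (h : x ^ n + y ^ n = 1)
    (hn : n ≠ 0) : x ^ (n + 1) = x := by
  obtain ⟨m, rfl⟩ := Nat.exists_eq_add_one_of_ne_zero hn
  linear_combination x * h - y ^ m * hxy

theorem isIdempotentElem_pow_of_mul_eq_zero (hxy : x * y = 0) (h : x ^ n + y ^ n = 1)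
    (hn : n ≠ 0) : IsIdempotentElem (x ^ n) := by
  have hxyn : (x * y) ^ n = 0 := by rw [hxy, zero_pow hn]
  unfold IsIdempotentElem
  linear_combination x ^ n * h - hxyn

variable {K : Type*} [CommRing K] [Algebra K A]

theorem mul_mem_span_pow_three (hxy : x * y = 0) (h : x ^ 3 + y ^ 3 = 1) {a : A}
    (ha : a ∈ Submodule.span K ({x, x ^ 2, x ^ 3} ∪ {y, y ^ 2, y ^ 3})) :
    a * x ∈ Submodule.span K ({x, x ^ 2, x ^ 3} ∪ {y, y ^ 2, y ^ 3}) := by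
  refine (Submodule.span_le (p := (Submodule.span K _).comap (LinearMap.mulRight K x))).2
    ?_ ha
  have hyx : y * x = 0 := by rw [mul_comm, hxy]
  rintro g ((rfl | rfl | rfl) | (rfl | rfl | rfl)) <;>
    simp only [SetLike.mem_coe, Submodule.mem_comap, LinearMap.mulRight_apply]
  · exact Submodule.subset_span (by simp [sq])
  · exact Submodule.subset_span (by simp [pow_succ])
  · rw [← pow_succ, pow_succ_eq_self_of_mul_eq_zero hxy h three_ne_zero]
    exact Submodule.subset_span (by simp)
  all_goals simp [pow_succ, mul_assoc, hyx]

theorem span_pow_three_eq_top (hgen : Algebra.adjoin K {x, y} = ⊤) (hxy : x * y = 0)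
    (h : x ^ 3 + y ^ 3 = 1) :
    Submodule.span K ({x, x ^ 2, x ^ 3} ∪ {y, y ^ 2, y ^ 3}) = ⊤ := by
  refine eq_top_iff.2 ?_
  calc ⊤ = Subalgebra.toSubmodule (Algebra.adjoin K {x, y}) := by
        rw [hgen, Algebra.top_toSubmodule]
    _ ≤ _ := Algebra.toSubmodule_adjoin_le_of_mul_mem _ ?_ ?_
  · rw [← h]
    exact add_mem (Submodule.subset_span (by simp)) (Submodule.subset_span (by simp))
  · rintro a ha g (rfl | rfl)
    · exact mul_mem_span_pow_three hxy h ha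
    · rw [Set.union_comm] at ha ⊢
      exact mul_mem_span_pow_three (by rw [mul_comm, hxy]) (by rw [add_comm, h]) ha

end OrthogonalPowers

namespace AdjoinRoot

variable (R : Type*) [CommRing R]

theorem root_X_pow_sub_one_pow (n : ℕ) : root (X ^ n - 1 : R[X]) ^ n = 1 := by
  have h := mk_self (f := (X ^ n - 1 : R[X]))
  rwa [map_sub, map_pow, mk_X, map_one, sub_eq_zero] at h

theorem exists_basis_X_pow_sub_one [Nontrivial R] {n : ℕ} (hn : n ≠ 0) :
    ∃ b : Basis (Fin n) R (AdjoinRoot (X ^ n - 1 : R[X])),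
      ∀ i, b i = root (X ^ n - 1 : R[X]) ^ ((i : ℕ) + 1) := by
  have hmonic : (X ^ n - 1 : R[X]).Monic := by simpa using monic_X_pow_sub_C (1 : R) hn
  have hdeg : (X ^ n - 1 : R[X]).natDegree = n := by
    simpa using natDegree_X_pow_sub_C (r := (1 : R))
  let u := (IsUnit.of_pow_eq_one (root_X_pow_sub_one_pow R n) hn).unit
  refine ⟨((powerBasis' hmonic).basis.reindex (finCongr hdeg)).map
    (u.mulLeftLinearEquiv R _), fun i => ?_⟩
  simp only [Basis.map_apply, Basis.coe_reindex, PowerBasis.coe_basis, powerBasis'_gen,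
    Function.comp_apply, Units.mulLeftLinearEquiv_apply, IsUnit.unit_spec, pow_succ', u]
  rfl

theorem exists_basis_prod_X_pow_three_sub_one [Nontrivial R] :
    ∃ C : Basis (Fin 6) R (AdjoinRoot (X ^ 3 - 1 : R[X]) × AdjoinRoot (X ^ 3 - 1 : R[X])),
      let r := root (X ^ 3 - 1 : R[X])
      ⇑C = ![(r, 0), (r ^ 2, 0), (r ^ 3, 0), (0, r), (0, r ^ 2), (0, r ^ 3)] := by
  obtain ⟨b, hb⟩ := exists_basis_X_pow_sub_one R three_ne_zero
  refine ⟨(b.prod b).reindex finSumFinEquiv, ?_⟩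
  ext j : 1
  fin_cases j <;> simp [hb, finSumFinEquiv, Fin.addCases, Fin.subNat]

end AdjoinRoot

theorem MvPolynomial.span_le_ker_aeval_pair {R A : Type*} [CommRing R] [CommRing A]
    [Algebra R A] {u : A} {n : ℕ} (hu : u ^ n = 1) (hn : n ≠ 0) :
    Ideal.span {X 0 * X 1, X 0 ^ n + X 1 ^ n - 1} ≤
      RingHom.ker (aeval ![(u, 0), (0, u)] : MvPolynomial (Fin 2) R →ₐ[R] A × A) := by
  rw [Ideal.span_le]
  rintro p (rfl | rfl) <;> simp [hu, zero_pow hn, Prod.ext_iff]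

theorem MvPolynomial.exists_algHom_quotient_comp_eq_basis (R : Type*) [CommRing R]
    [Nontrivial R] (H : Ideal (MvPolynomial (Fin 2) R))
    (hH : H ≤ Ideal.span {X 0 * X 1, X 0 ^ 3 + X 1 ^ 3 - 1}) :
    ∃ (φ : (MvPolynomial (Fin 2) R ⧸ H) →ₐ[R]
        AdjoinRoot (Polynomial.X ^ 3 - 1 : R[X]) × AdjoinRoot (Polynomial.X ^ 3 - 1 : R[X]))
      (C : Basis (Fin 6) R
        (AdjoinRoot (Polynomial.X ^ 3 - 1 : R[X]) × AdjoinRoot (Polynomial.X ^ 3 - 1 : R[X]))),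
      let x := Ideal.Quotient.mk H (X 0)
      let y := Ideal.Quotient.mk H (X 1)
      φ.toLinearMap ∘ ![x, x ^ 2, x ^ 3, y, y ^ 2, y ^ 3] = C := by
  obtain ⟨C, hC⟩ := AdjoinRoot.exists_basis_prod_X_pow_three_sub_one R
  let r := AdjoinRoot.root (Polynomial.X ^ 3 - 1 : R[X])
  let φ := Ideal.Quotient.liftₐ H (aeval ![(r, 0), (0, r)]) fun _ hp =>
    span_le_ker_aeval_pair (AdjoinRoot.root_X_pow_sub_one_pow R 3) three_ne_zero (hH hp)
  have hφ (p) : φ (Ideal.Quotient.mk H p) = aeval ![(r, 0), (0, r)] p := rfl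
  refine ⟨φ, C, ?_⟩
  rw [hC]
  ext j : 1
  fin_cases j <;> simp [r, hφ]

/-- The `K`-algebra `H = K[a,b]/(ab, a³ + b³ − 1)` is isomorphic as a
`K`-algebra to `(K[t]/(t³ − 1)) × (K[t]/(t³ − 1))`, the direct product of two copies of
the group algebra of the cyclic group of order 3.  Moreover the classes of
`a, a², a³, b, b², b³` form a `K`-basis of `H` (so `H` is 6-dimensional), and the
classes of `a³` and `b³` are orthogonal idempotents whose sum is `1`. -/
theorem stmt12 (K : Type*) [Field K]
    (H : Ideal (MvPolynomial (Fin 2) K))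
    (hH : H = Ideal.span {MvPolynomial.X 0 * MvPolynomial.X 1,
      MvPolynomial.X 0 ^ 3 + MvPolynomial.X 1 ^ 3 - 1}) :
    Nonempty ((MvPolynomial (Fin 2) K ⧸ H) ≃ₐ[K]
      ((Polynomial K ⧸ Ideal.span {(Polynomial.X : Polynomial K) ^ 3 - 1}) ×
        (Polynomial K ⧸ Ideal.span {(Polynomial.X : Polynomial K) ^ 3 - 1}))) ∧
    LinearIndependent K
      ![Ideal.Quotient.mk H (MvPolynomial.X 0),
        Ideal.Quotient.mk H (MvPolynomial.X 0 ^ 2),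
        Ideal.Quotient.mk H (MvPolynomial.X 0 ^ 3),
        Ideal.Quotient.mk H (MvPolynomial.X 1),
        Ideal.Quotient.mk H (MvPolynomial.X 1 ^ 2),
        Ideal.Quotient.mk H (MvPolynomial.X 1 ^ 3)] ∧
    Submodule.span K
      ({Ideal.Quotient.mk H (MvPolynomial.X 0),
        Ideal.Quotient.mk H (MvPolynomial.X 0 ^ 2),
        Ideal.Quotient.mk H (MvPolynomial.X 0 ^ 3),
        Ideal.Quotient.mk H (MvPolynomial.X 1),
        Ideal.Quotient.mk H (MvPolynomial.X 1 ^ 2),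
        Ideal.Quotient.mk H (MvPolynomial.X 1 ^ 3)} :
        Set (MvPolynomial (Fin 2) K ⧸ H)) = ⊤ ∧
    Module.finrank K (MvPolynomial (Fin 2) K ⧸ H) = 6 ∧
    Ideal.Quotient.mk H (MvPolynomial.X 0 ^ 3) *
      Ideal.Quotient.mk H (MvPolynomial.X 0 ^ 3) =
      Ideal.Quotient.mk H (MvPolynomial.X 0 ^ 3) ∧
    Ideal.Quotient.mk H (MvPolynomial.X 1 ^ 3) *
      Ideal.Quotient.mk H (MvPolynomial.X 1 ^ 3) =
      Ideal.Quotient.mk H (MvPolynomial.X 1 ^ 3) ∧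
    Ideal.Quotient.mk H (MvPolynomial.X 0 ^ 3) *
      Ideal.Quotient.mk H (MvPolynomial.X 1 ^ 3) = 0 ∧
    Ideal.Quotient.mk H (MvPolynomial.X 0 ^ 3) +
      Ideal.Quotient.mk H (MvPolynomial.X 1 ^ 3) = 1 := by
  obtain ⟨φ, C, hφ⟩ := MvPolynomial.exists_algHom_quotient_comp_eq_basis K H hH.le
  dsimp only at hφ
  simp only [map_pow]
  set x := Ideal.Quotient.mk H (MvPolynomial.X 0) with hx
  set y := Ideal.Quotient.mk H (MvPolynomial.X 1) with hy
  have hxy : x * y = 0 := by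
    rw [hx, hy, ← map_mul, Ideal.Quotient.eq_zero_iff_mem, hH]
    exact Ideal.subset_span (by simp)
  have hcube : x ^ 3 + y ^ 3 = 1 := by
    rw [← sub_eq_zero, hx, hy, ← map_pow, ← map_pow, ← map_add, ← map_one (Ideal.Quotient.mk H),
      ← map_sub, Ideal.Quotient.eq_zero_iff_mem, hH]
    exact Ideal.subset_span (by simp)
  have hgen : Algebra.adjoin K {x, y} = ⊤ := by
    rw [← MvPolynomial.adjoin_range_mk_X H]
    congr 1
    ext
    simp [x, y, Fin.exists_fin_two, eq_comm]
  have hspan : Submodule.span K {x, x ^ 2, x ^ 3, y, y ^ 2, y ^ 3} = ⊤ := by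
    simpa only [Set.insert_union, Set.singleton_union] using span_pow_three_eq_top hgen hxy hcube
  have hbij := φ.toLinearMap.bijective_of_comp_eq_basis (by
    simp only [Matrix.range_cons, Matrix.range_empty, Set.union_empty, Set.singleton_union]
    exact hspan.ge) C hφ
  refine ⟨⟨AlgEquiv.ofBijective φ hbij⟩, .of_comp φ.toLinearMap (hφ ▸ C.linearIndependent),
    hspan, ?_, (isIdempotentElem_pow_of_mul_eq_zero hxy hcube three_ne_zero).eq,
    (isIdempotentElem_pow_of_mul_eq_zero (mul_comm x y ▸ hxy) (add_comm (x ^ 3) _ ▸ hcube)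
      three_ne_zero).eq,
    by rw [← mul_pow, hxy, zero_pow three_ne_zero], hcube⟩
  rw [(AlgEquiv.ofBijective φ hbij).toLinearEquiv.finrank_eq, finrank_eq_card_basis C,
    Fintype.card_fin]
end

section
/- Let R be a commutative unital ring and let α, a, b ∈ R. Then the following two systems of conditions are equivalent: (1) a = a⁴, b = αb⁴, ab² = 0, a²b = 0, and a³ − αb³ is a unit of R; (2) ab = 0 and a³ + αb³ = 1. Moreover, if (2) holds then (a³ − αb³)² = 1. -/
/-!
Put `e = a³` and `f = αb³`. The relations `a = a⁴` and `b = αb⁴` say exactly that `e` and `f`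
are idempotents, and `e² - f² = (e - f)(e + f)` equals `e - f`, so when `e - f` is a unit,
`e + f = 1`. Conversely, if `ab = 0` then `ef = 0`, so `e + f = 1` forces
`(e - f)² = (e + f)² - 4ef = 1`, and multiplying `e + f = 1` by `a` and by `b` gives back
`a = a⁴` and `b = αb⁴`.
-/

section CommRing

variable {R : Type*} [CommRing R]

theorem isIdempotentElem_mul_pow_three {α a : R} (h : a = α * a ^ 4) :
    IsIdempotentElem (α * a ^ 3) := by
  unfold IsIdempotentElem
  linear_combination (-(α * a ^ 2)) * h

theorem IsIdempotentElem.add_eq_one_of_isUnit_sub {e f : R} (he : IsIdempotentElem e)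
    (hf : IsIdempotentElem f) (hu : IsUnit (e - f)) : e + f = 1 := by
  refine hu.mul_left_cancel ?_
  calc (e - f) * (e + f) = e * e - f * f := by ring
    _ = (e - f) * 1 := by rw [he.eq, hf.eq, mul_one]

theorem sub_sq_eq_one_of_mul_eq_zero_of_add_eq_one {u v : R} (hmul : u * v = 0)
    (hadd : u + v = 1) : (u - v) ^ 2 = 1 := by
  linear_combination (u + v + 1) * hadd - 4 * hmul

end CommRing

/-- Let `R` be a commutative unital ring and `α, a, b ∈ R`.  The
conditions `a = a⁴`, `b = αb⁴`, `ab² = 0`, `a²b = 0` and `a³ − αb³ ∈ R^×` hold if and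
only if `ab = 0` and `a³ + αb³ = 1`.  Moreover, in that case `(a³ − αb³)² = 1`. -/
theorem stmt13 (R : Type*) [CommRing R] (α a b : R) :
    ((a = a ^ 4 ∧ b = α * b ^ 4 ∧ a * b ^ 2 = 0 ∧ a ^ 2 * b = 0 ∧
        IsUnit (a ^ 3 - α * b ^ 3)) ↔
      (a * b = 0 ∧ a ^ 3 + α * b ^ 3 = 1)) ∧
    ((a * b = 0 ∧ a ^ 3 + α * b ^ 3 = 1) → (a ^ 3 - α * b ^ 3) ^ 2 = 1) := by
  have hsq : a * b = 0 ∧ a ^ 3 + α * b ^ 3 = 1 → (a ^ 3 - α * b ^ 3) ^ 2 = 1 :=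
    fun ⟨hab, hsum⟩ => sub_sq_eq_one_of_mul_eq_zero_of_add_eq_one
      (by linear_combination α * a ^ 2 * b ^ 2 * hab) hsum
  refine ⟨⟨fun ⟨ha, hb, _, ha2b, hu⟩ => ⟨?_, ?_⟩, fun ⟨hab, hsum⟩ => ⟨?_, ?_, ?_, ?_, ?_⟩⟩, hsq⟩
  · calc a * b = a ^ 4 * (α * b ^ 4) := by rw [← ha, ← hb]
      _ = α * (a ^ 2 * b) * (a ^ 2 * b ^ 3) := by ring
      _ = 0 := by rw [ha2b]; ring
  · have hae : IsIdempotentElem (a ^ 3) := by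
      simpa using isIdempotentElem_mul_pow_three (α := 1) (a := a) (by rwa [one_mul])
    exact hae.add_eq_one_of_isUnit_sub (isIdempotentElem_mul_pow_three hb) hu
  · linear_combination (-a) * hsum + α * b ^ 2 * hab
  · linear_combination (-b) * hsum + a ^ 2 * hab
  · linear_combination b * hab
  · linear_combination a * hab
  · exact IsUnit.of_pow_eq_one (hsq ⟨hab, hsum⟩) two_ne_zero
end

section
/- Let R be a commutative unital ring and equip the R-module R² with the R-bilinear commutative product given by (a₁,a₂)(b₁,b₂) = (a₂b₂, 0); with e₁ = (1,0), e₂ = (0,1) this is the R-algebra (A₆)_R, satisfying e₁² = 0, e₂² = e₁, e₁e₂ = 0. An R-linear map f : R² → R² is a bijective algebra homomorphism (an R-algebra automorphism of (A₆)_R) if and only if there exist c ∈ R and a unit d ∈ R^× such that f(e₁) = d²e₁ and f(e₂) = ce₁ + de₂. -/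
/-- The product of the scalar extension `(A₆)_R` realized on `R × R`:
with `e₁ = (1,0)`, `e₂ = (0,1)` one has `e₁² = 0`, `e₂² = e₁`, `e₁e₂ = e₂e₁ = 0`. -/
def a6mul {R : Type*} [CommRing R] (u v : R × R) : R × R := (u.2 * v.2, 0)

/-! An automorphism is determined by `f(e₂) = (c, d)`: multiplicativity on `e₂² = e₁` forces
`f(e₁) = f(e₂)² = (d², 0)`, so `f` is upper triangular with diagonal `(d², d)`. Such a map is
bijective exactly when `d` is a unit, and it is then automatically multiplicative. -/

open Function

section
variable {R : Type*} [CommRing R]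

lemma LinearMap.apply_prod_eq (f : R × R →ₗ[R] R × R) (x y : R) :
    f (x, y) = x • f (1, 0) + y • f (0, 1) := by
  rw [← map_smul, ← map_smul, ← map_add]
  simp

lemma bijective_upperTriangular {a d : R} (ha : IsUnit a) (hd : IsUnit d) (b : R) :
    Bijective fun p : R × R => (a * p.1 + b * p.2, d * p.2) := by
  refine ⟨?_, ?_⟩
  · rintro ⟨x, y⟩ ⟨x', y'⟩ h
    obtain ⟨h₁, h₂⟩ := Prod.ext_iff.mp h
    have hy : y = y' := hd.mul_left_cancel h₂
    subst hy
    have hx : x = x' := ha.mul_left_cancel (add_right_cancel h₁)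
    rw [hx]
  · rintro ⟨p, q⟩
    obtain ⟨a, rfl⟩ := ha
    obtain ⟨d, rfl⟩ := hd
    refine ⟨(↑a⁻¹ * (p - b * (↑d⁻¹ * q)), ↑d⁻¹ * q), ?_⟩
    simp [← mul_assoc]

lemma apply_one_zero_of_map_a6mul {f : R × R →ₗ[R] R × R}
    (hf : ∀ u v : R × R, f (a6mul u v) = a6mul (f u) (f v)) :
    f (1, 0) = ((f (0, 1)).2 ^ 2, 0) := by
  simpa [a6mul, sq] using hf (0, 1) (0, 1)

lemma isUnit_snd_apply_zero_one {f : R × R →ₗ[R] R × R} (hf : Surjective f)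
    (h : (f (1, 0)).2 = 0) : IsUnit (f (0, 1)).2 := by
  obtain ⟨⟨x, y⟩, hxy⟩ := hf (0, 1)
  have : y * (f (0, 1)).2 = 1 := by
    simpa [LinearMap.apply_prod_eq f x y, h] using congrArg Prod.snd hxy
  exact .of_mul_eq_one_right _ this

end

/-- An `R`-linear map `f : R² → R²` is an `R`-algebra automorphism of
`(A₆)_R` if and only if there exist `c ∈ R` and a unit `d ∈ R^×` with `f(e₁) = d²e₁`
and `f(e₂) = ce₁ + de₂`. -/
theorem stmt14 (R : Type*) [CommRing R] (f : (R × R) →ₗ[R] (R × R)) :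
    (Function.Bijective f ∧ ∀ u v : R × R, f (a6mul u v) = a6mul (f u) (f v)) ↔
    ∃ c d : R, IsUnit d ∧ f (1, 0) = (d ^ 2, 0) ∧ f (0, 1) = (c, d) := by
  constructor
  · rintro ⟨hbij, hmul⟩
    have he₁ := apply_one_zero_of_map_a6mul hmul
    exact ⟨_, _, isUnit_snd_apply_zero_one hbij.2 (by rw [he₁]), he₁, rfl⟩
  · rintro ⟨c, d, hd, he₁, he₂⟩
    have hf : ⇑f = fun p : R × R => (d ^ 2 * p.1 + c * p.2, d * p.2) := by
      funext ⟨x, y⟩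
      rw [LinearMap.apply_prod_eq, he₁, he₂]
      ext <;> simp [mul_comm]
    rw [hf]
    refine ⟨bijective_upperTriangular (hd.pow 2) hd c, fun u v => ?_⟩
    ext <;> simp only [a6mul] <;> ring
end

section
/- Let K be a field, n ≥ 1, and let ω = (ω_{ji}) be an invertible n×n matrix over K. Let A be the n-dimensional perfect evolution algebra with natural basis e₁,…,eₙ, products e_i e_j = 0 for i ≠ j and e_i² = Σ_j ω_{ji} e_j. Let R = K[x₁,…,xₙ,x₁*,…,xₙ*] with the K-algebra involution * interchanging x_i ↔ x_i*, fix λ₀,λ₁,λ₂,λ₃ ∈ K, set p(u,v) = λ₀uv + λ₁uv* + λ₂u*v + λ₃u*v*, let I ⊲ R be the ideal generated by the polynomials p(x_i,x_j) for i ≠ j and p(x_i,x_i) − Σ_j ω_{ji}x_j together with their images under *, set U_p = R/I, and let ρ : A → U_p be the K-linear map with ρ(e_i) = x̄_i. If ρ(a)* = ρ(a) for every a ∈ A (i.e. ρ(A) ⊆ Sym(U_p,*)), then the kernel of ρ is a two-sided ideal of A and the quotient algebra A/ker(ρ) is associative; in particular, if ρ is injective then A is associative. -/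
open MvPolynomial

/-- The involution `*` of `R = K[x₁,…,xₙ,x₁*,…,xₙ*]` interchanging `xᵢ ↔ xᵢ*`
(the variable `Xᵢ` is `X (i, false)` and `xᵢ*` is `X (i, true)`). -/
noncomputable def evStarN (K : Type*) [CommRing K] (n : ℕ) :
    MvPolynomial (Fin n × Bool) K →ₐ[K] MvPolynomial (Fin n × Bool) K :=
  rename fun v => (v.1, !v.2)

/-- The product `p(u,v) = λ₀uv + λ₁uv* + λ₂u*v + λ₃u*v*` on `R`. -/
noncomputable def evPN (K : Type*) [CommRing K] (n : ℕ) (l0 l1 l2 l3 : K)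
    (u v : MvPolynomial (Fin n × Bool) K) : MvPolynomial (Fin n × Bool) K :=
  C l0 * (u * v) + C l1 * (u * evStarN K n v) + C l2 * (evStarN K n u * v) +
    C l3 * (evStarN K n u * evStarN K n v)

/-- The defining ideal `I ⊲ R` of the universal associative and commutative
representation: it is generated by the polynomials `p(xᵢ,xⱼ)` for `i ≠ j` and
`p(xᵢ,xᵢ) − Σⱼ ω_{ji}xⱼ`, together with their images under the involution. -/
noncomputable def evIdealN (K : Type*) [CommRing K] (n : ℕ) (l0 l1 l2 l3 : K)
    (ω : Matrix (Fin n) (Fin n) K) : Ideal (MvPolynomial (Fin n × Bool) K) :=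
  Ideal.span
    ({q | ∃ i j : Fin n, i ≠ j ∧
        (q = evPN K n l0 l1 l2 l3 (X (i, false)) (X (j, false)) ∨
          q = evStarN K n (evPN K n l0 l1 l2 l3 (X (i, false)) (X (j, false))))} ∪
      {q | ∃ i : Fin n,
        q = evPN K n l0 l1 l2 l3 (X (i, false)) (X (i, false)) -
            ∑ j : Fin n, C (ω j i) * X (j, false) ∨
        q = evStarN K n (evPN K n l0 l1 l2 l3 (X (i, false)) (X (i, false)) -
            ∑ j : Fin n, C (ω j i) * X (j, false))})

/-- The `n`-dimensional evolution algebra with structure matrix `ω`, realized on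
`Fin n → K`: `eᵢeⱼ = 0` for `i ≠ j` and `eᵢ² = Σⱼ ω_{ji} eⱼ`. -/
def evMulN {K : Type*} [CommRing K] {n : ℕ} (ω : Matrix (Fin n) (Fin n) K)
    (a b : Fin n → K) : Fin n → K :=
  fun j => ∑ i : Fin n, a i * b i * ω j i

/-- The universal representation `ρ : A → U_p = R/I`, `ρ(eᵢ) = x̄ᵢ`. -/
noncomputable def evRho (K : Type*) [CommRing K] (n : ℕ) (l0 l1 l2 l3 : K)
    (ω : Matrix (Fin n) (Fin n) K) (a : Fin n → K) :
    MvPolynomial (Fin n × Bool) K ⧸ evIdealN K n l0 l1 l2 l3 ω :=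
  Ideal.Quotient.mk _ (∑ i : Fin n, C (a i) * X (i, false))

set_option maxHeartbeats 1000000 in
set_option synthInstance.maxHeartbeats 400000 in
/-- Let `A` be the `n`-dimensional perfect evolution algebra with
invertible structure matrix `ω`, and `ρ : A → U_p` its universal associative and
commutative representation.  If `ρ(a)* = ρ(a)` for every `a ∈ A`, then the kernel of
`ρ` is a two-sided ideal of `A` and `A/ker ρ` is associative; in particular, if `ρ` is
injective then `A` is associative. -/
theorem stmt18 (K : Type*) [Field K] (n : ℕ) (hn : 1 ≤ n)
    (ω : Matrix (Fin n) (Fin n) K) (hω : ω.det ≠ 0)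
    (l0 l1 l2 l3 : K)
    (hsym : ∀ a : Fin n → K,
      Ideal.Quotient.mk (evIdealN K n l0 l1 l2 l3 ω)
        (evStarN K n (∑ i : Fin n, C (a i) * X (i, false))) =
      evRho K n l0 l1 l2 l3 ω a) :
    (∀ a b : Fin n → K, evRho K n l0 l1 l2 l3 ω a = 0 →
      evRho K n l0 l1 l2 l3 ω (evMulN ω a b) = 0 ∧
        evRho K n l0 l1 l2 l3 ω (evMulN ω b a) = 0) ∧
    (∀ a b c : Fin n → K,
      evRho K n l0 l1 l2 l3 ω (evMulN ω (evMulN ω a b) c) =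
        evRho K n l0 l1 l2 l3 ω (evMulN ω a (evMulN ω b c))) ∧
    (Function.Injective (evRho K n l0 l1 l2 l3 ω) →
      ∀ a b c : Fin n → K,
        evMulN ω (evMulN ω a b) c = evMulN ω a (evMulN ω b c)) := by
  set π : MvPolynomial (Fin n × Bool) K →+* MvPolynomial (Fin n × Bool) K ⧸ evIdealN K n l0 l1 l2 l3 ω :=
    Ideal.Quotient.mk (evIdealN K n l0 l1 l2 l3 ω) with hπ
  set lam : K := l0 + l1 + l2 + l3 with hlam
  have hClam : π (C lam) = π (C l0) + π (C l1) + π (C l2) + π (C l3) := by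
    rw [hlam]; simp only [C_add, map_add]
  have hstar : ∀ i : Fin n, π (X (i, true)) = π (X (i, false)) := by
    intro i
    have h := hsym (fun j => if j = i then (1 : K) else 0)
    simp only [evRho, evStarN, map_sum, map_mul, rename_C, rename_X, apply_ite C,
      map_zero, map_one, ite_mul, zero_mul, one_mul, Finset.sum_ite_eq',
      Finset.mem_univ, if_true] at h
    exact h
  have relp : ∀ i j : Fin n,
      π (evPN K n l0 l1 l2 l3 (X (i, false)) (X (j, false))) =
        π (C lam) * (π (X (i, false)) * π (X (j, false))) := by
    intro i j
    simp only [evPN, evStarN, rename_X, map_add, map_mul, Bool.not_false]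
    rw [hstar i, hstar j, hClam]
    ring
  have rel1 : ∀ i j : Fin n, i ≠ j →
      π (C lam) * (π (X (i, false)) * π (X (j, false))) = 0 := by
    intro i j hij
    rw [← relp]
    exact Ideal.Quotient.eq_zero_iff_mem.mpr
      (Ideal.subset_span (Or.inl ⟨i, j, hij, Or.inl rfl⟩))
  have rel2 : ∀ i : Fin n,
      π (C lam) * (π (X (i, false)) * π (X (i, false))) =
        ∑ j : Fin n, π (C (ω j i)) * π (X (j, false)) := by
    intro i
    have h0 : π (evPN K n l0 l1 l2 l3 (X (i, false)) (X (i, false)) -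
        ∑ j : Fin n, C (ω j i) * X (j, false)) = 0 :=
      Ideal.Quotient.eq_zero_iff_mem.mpr
        (Ideal.subset_span (Or.inr ⟨i, Or.inl rfl⟩))
    rw [map_sub, sub_eq_zero, relp, map_sum] at h0
    simpa only [map_mul] using h0
  have rhoEq : ∀ a : Fin n → K,
      evRho K n l0 l1 l2 l3 ω a = ∑ i : Fin n, π (C (a i)) * π (X (i, false)) := by
    intro a
    simp only [evRho, map_sum, map_mul, hπ]
  have key : ∀ a b : Fin n → K,
      evRho K n l0 l1 l2 l3 ω (evMulN ω a b) =
        π (C lam) * (evRho K n l0 l1 l2 l3 ω a * evRho K n l0 l1 l2 l3 ω b) := by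
    intro a b
    have inner : ∀ i : Fin n,
        (∑ j : Fin n, π (C lam) *
          (π (C (a i)) * π (X (i, false)) * (π (C (b j)) * π (X (j, false))))) =
        π (C (a i)) * π (C (b i)) *
          ∑ j : Fin n, π (C (ω j i)) * π (X (j, false)) := by
      intro i
      rw [Finset.sum_eq_single i]
      · rw [← rel2 i]; ring
      · intro j _ hji
        have h := rel1 i j (fun h => hji (h ▸ rfl))
        calc π (C lam) *
              (π (C (a i)) * π (X (i, false)) * (π (C (b j)) * π (X (j, false))))
            = π (C (a i)) * π (C (b j)) *
                (π (C lam) * (π (X (i, false)) * π (X (j, false)))) := by ring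
          _ = 0 := by rw [h, mul_zero]
      · intro h; exact absurd (Finset.mem_univ i) h
    calc evRho K n l0 l1 l2 l3 ω (evMulN ω a b)
        = ∑ j : Fin n, ∑ i : Fin n,
            π (C (a i)) * π (C (b i)) * (π (C (ω j i)) * π (X (j, false))) := by
          rw [rhoEq]
          refine Finset.sum_congr rfl fun j _ => ?_
          simp only [evMulN]
          rw [show (C (∑ i : Fin n, a i * b i * ω j i) : MvPolynomial (Fin n × Bool) K)
              = ∑ i : Fin n, C (a i * b i * ω j i) from map_sum C _ _,
            map_sum, Finset.sum_mul]
          refine Finset.sum_congr rfl fun i _ => ?_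
          simp only [C_mul, map_mul]
          ring
      _ = ∑ i : Fin n, ∑ j : Fin n,
            π (C (a i)) * π (C (b i)) * (π (C (ω j i)) * π (X (j, false))) :=
          Finset.sum_comm
      _ = ∑ i : Fin n, π (C (a i)) * π (C (b i)) *
            ∑ j : Fin n, π (C (ω j i)) * π (X (j, false)) :=
          Finset.sum_congr rfl fun i _ => (Finset.mul_sum _ _ _).symm
      _ = ∑ i : Fin n, ∑ j : Fin n, π (C lam) *
            (π (C (a i)) * π (X (i, false)) * (π (C (b j)) * π (X (j, false)))) :=
          (Finset.sum_congr rfl fun i _ => inner i).symm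
      _ = π (C lam) *
            (evRho K n l0 l1 l2 l3 ω a * evRho K n l0 l1 l2 l3 ω b) := by
          rw [rhoEq a, rhoEq b, Finset.sum_mul_sum]
          simp only [Finset.mul_sum]
  refine ⟨?_, ?_, ?_⟩
  · intro a b ha
    constructor <;> rw [key, ha] <;> ring
  · intro a b c
    rw [key, key, key, key]; ring
  · intro hinj a b c
    exact hinj (by rw [key, key, key, key]; ring)
end
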